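/- arXiv:2001.00385 — 8 statements merged into one kernel-verified Lean document; each statement's English description precedes it below -/
import Mathlib

section
/- Let G be a connected graph on n vertices with σ₃(G) ≥ n and p(G) ≤ n-1 (i.e., G has no Hamiltonian path). Then c(G) = p(G) - 1. -/
open SimpleGraph

/-- `pNum G` is `p(G)`: the number of vertices of a longest path in `G`. -/
noncomputable def pNum {V : Type*} (G : SimpleGraph V) : ℕ :=
  sSup {n | ∃ (a b : V) (w : G.Walk a b), w.IsPath ∧ n = w.length + 1}

/-- `cNum G` is `c(G)`: the number of vertices of a longest cycle in `G` (0 if none). -/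
noncomputable def cNum {V : Type*} (G : SimpleGraph V) : ℕ :=
  sSup {n | ∃ (a : V) (w : G.Walk a a), w.IsCycle ∧ n = w.length}

section Helpers
open List
variable {V : Type*} {G : SimpleGraph V}


lemma flip_adj (G : SimpleGraph V) : flip G.Adj = G.Adj := by
  ext a b; exact G.adj_comm b a

lemma chain'_reverse_adj {l : List V} (h : l.Chain' G.Adj) : l.reverse.Chain' G.Adj := by
  unfold List.Chain' at *; rw [List.isChain_reverse, show (fun a b => G.Adj b a) = G.Adj from flip_adj G]; exact h

lemma walk_of_chain : ∀ (l : List V) (h : l ≠ []) (_ : l.Chain' G.Adj),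
    ∃ w : G.Walk (l.head h) (l.getLast h), w.support = l
  | [], h, _ => absurd rfl h
  | [a], _, _ => ⟨Walk.nil, rfl⟩
  | (a :: b :: t), _, hc => by
    obtain ⟨hab, hc'⟩ := List.isChain_cons_cons.mp hc
    obtain ⟨w, hw⟩ := walk_of_chain (b :: t) (by simp) hc'
    refine ⟨Walk.cons hab (w.copy rfl ?_), ?_⟩
    rw [List.getLast_cons (by simp : (b :: t) ≠ [])]
    exact congrArg (a :: ·) ((Walk.support_copy _ _ _).trans hw)

lemma bddAbove_pSet [Fintype V] (G : SimpleGraph V) :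
    BddAbove {n | ∃ (a b : V) (w : G.Walk a b), w.IsPath ∧ n = w.length + 1} := by
  refine ⟨Fintype.card V, fun m hm => ?_⟩
  obtain ⟨a, b, w, hw, rfl⟩ := hm
  have := hw.support_nodup.length_le_card
  rwa [Walk.length_support] at this

lemma path_list_le_pNum [Fintype V] (l : List V) (hc : l.Chain' G.Adj) (hd : l.Nodup) :
    l.length ≤ pNum G := by
  rcases eq_or_ne l [] with rfl | hne
  · simp
  obtain ⟨w, hw⟩ := walk_of_chain l hne hc
  have : l.length ∈ {n | ∃ (a b : V) (w : G.Walk a b), w.IsPath ∧ n = w.length + 1} := by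
    refine ⟨_, _, w, (Walk.isPath_def _).mpr (hw.symm ▸ hd), ?_⟩
    rw [← Walk.length_support, hw]
  exact le_csSup (bddAbove_pSet G) this

lemma exists_longest_list [Fintype V] (G : SimpleGraph V) [Nonempty V] :
    ∃ l : List V, l.Chain' G.Adj ∧ l.Nodup ∧ l ≠ [] ∧ l.length = pNum G := by
  have hne : {n | ∃ (a b : V) (w : G.Walk a b), w.IsPath ∧ n = w.length + 1}.Nonempty := by
    obtain ⟨a⟩ := ‹Nonempty V›
    exact ⟨1, a, a, Walk.nil, Walk.IsPath.nil, rfl⟩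
  obtain ⟨a, b, w, hw, hlen⟩ := Nat.sSup_mem hne (bddAbove_pSet G)
  refine ⟨w.support, Walk.isChain_adj_support w, hw.support_nodup, w.support_ne_nil, ?_⟩
  rw [Walk.length_support, ← hlen]; rfl

lemma closing_edge_not_mem {x y : V} (w : G.Walk x y) (hw : w.IsPath) (hlen : 2 ≤ w.length) :
    s(y, x) ∉ w.edges := by
  intro hmem
  cases w with
  | nil => simp at hlen
  | @cons _ b _ h q =>
    rw [Walk.edges_cons, List.mem_cons] at hmem
    rw [Walk.cons_isPath_iff] at hw
    rcases hmem with heq | hmem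
    · rw [Sym2.eq_iff] at heq
      rcases heq with ⟨rfl, rfl⟩ | ⟨rfl, -⟩
      · exact hw.2 (q.end_mem_support)
      · have : q = Walk.nil := (Walk.isPath_iff_eq_nil (p := q)).mp hw.1
        subst this
        simp at hlen
    · exact hw.2 (q.snd_mem_support_of_mem_edges hmem)

lemma bddAbove_cSet [Fintype V] (G : SimpleGraph V) :
    BddAbove {n | ∃ (a : V) (w : G.Walk a a), w.IsCycle ∧ n = w.length} := by
  refine ⟨Fintype.card V, fun m hm => ?_⟩
  obtain ⟨a, w, hw, rfl⟩ := hm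
  have h1 := List.Nodup.length_le_card hw.support_nodup
  have h2 : w.support.tail.length = w.length := by
    have := Walk.length_support w
    simp only [List.length_tail, this]; omega
  omega

lemma cycle_list_le_cNum [Fintype V] (l : List V) (hc : l.Chain' G.Adj) (hd : l.Nodup)
    (hlen : 3 ≤ l.length) (hne : l ≠ [])
    (hcl : G.Adj (l.getLast hne) (l.head hne)) : l.length ≤ cNum G := by
  obtain ⟨w, hw⟩ := walk_of_chain l hne hc
  have hwp : w.IsPath := (Walk.isPath_def _).mpr (hw.symm ▸ hd)
  have hwl : w.length + 1 = l.length := by rw [← Walk.length_support, hw]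
  have hcyc : (Walk.cons hcl w).IsCycle := by
    rw [Walk.cons_isCycle_iff]
    exact ⟨hwp, closing_edge_not_mem w hwp (by omega)⟩
  have : l.length ∈ {n | ∃ (a : V) (w : G.Walk a a), w.IsCycle ∧ n = w.length} :=
    ⟨_, Walk.cons hcl w, hcyc, by rw [Walk.length_cons, hwl]⟩
  exact le_csSup (bddAbove_cSet G) this

lemma ext_head [Fintype V] {l : List V} (hc : l.Chain' G.Adj) (hd : l.Nodup)
    (hlen : l.length = pNum G) (h0 : 0 < l.length) {x : V} (hx : x ∉ l)
    (hadj : G.Adj x (l[0]'h0)) : False := by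
  have hne : l ≠ [] := List.ne_nil_of_length_pos h0
  have hc' : (x :: l).Chain' G.Adj := by
    unfold List.Chain'; rw [List.isChain_cons]
    refine ⟨fun y hy => ?_, hc⟩
    rw [List.head?_eq_head hne, Option.mem_some_iff] at hy
    rw [← hy, ← List.getElem_zero h0]
    exact hadj
  have := path_list_le_pNum (x :: l) hc' (List.nodup_cons.mpr ⟨hx, hd⟩)
  simp only [List.length_cons] at this
  omega

lemma ext_last [Fintype V] {l : List V} (hc : l.Chain' G.Adj) (hd : l.Nodup)
    (hlen : l.length = pNum G) (h0 : 0 < l.length) {x : V} (hx : x ∉ l)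
    (hadj : G.Adj x (l[l.length - 1]'(by omega))) : False := by
  have h0' : 0 < l.reverse.length := by simpa using h0
  refine ext_head (chain'_reverse_adj hc) (List.nodup_reverse.mpr hd) (by simpa using hlen) h0'
    (by simpa using hx) ?_
  rw [List.getElem_reverse]
  simpa using hadj

lemma walk_boundary {l : List V} : ∀ {x y : V} (_ : G.Walk x y), x ∉ l → y ∈ l →
    ∃ a b, a ∉ l ∧ b ∈ l ∧ G.Adj a b := by
  intro x y w
  induction w with
  | nil => intro hx hy; exact absurd hy hx
  | @cons u v z h q ih =>
    intro hx hy
    by_cases hv : v ∈ l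
    · exact ⟨u, v, hx, hv, h⟩
    · exact ih hv hy

lemma exists_boundary (hconn : G.Connected) {l : List V} {x y : V}
    (hx : x ∉ l) (hy : y ∈ l) : ∃ a b, a ∉ l ∧ b ∈ l ∧ G.Adj a b :=
  (hconn.preconnected x y).elim fun w => walk_boundary w hx hy

lemma take_getLast? {l : List V} {k : ℕ} (hk : k < l.length) :
    (l.take (k + 1)).getLast? = some (l[k]'hk) := by
  rw [List.take_succ, List.getElem?_eq_getElem hk, Option.toList_some, List.getLast?_concat]

lemma take_head? {l : List V} {k : ℕ} (h0 : 0 < l.length) :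
    (l.take (k + 1)).head? = some (l[0]'h0) := by
  rw [List.head?_eq_getElem?, List.getElem?_take_of_lt (by omega),
    List.getElem?_eq_getElem h0]

lemma key1 [Fintype V] {l : List V} (hc : l.Chain' G.Adj) (hd : l.Nodup)
    (hlen : l.length = pNum G) {u : V} (hu : u ∉ l) {k : ℕ}
    (hk : k + 1 < l.length) (h1 : G.Adj u (l[k]'(by omega)))
    (h2 : G.Adj (l[0]'(by omega)) (l[k+1]'hk)) : False := by
  set A := (l.take (k+1)).reverse with hA
  set B := l.drop (k+1) with hB
  have hperm : A ++ B ~ l := by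
    calc A ++ B ~ l.take (k+1) ++ B := (List.reverse_perm _).append_right _
    _ = l := List.take_append_drop _ _
  have hAne : A ≠ [] := by
    simp only [hA, ne_eq, List.reverse_eq_nil_iff, ← List.length_pos_iff, List.length_take]
    omega
  have hAlast : A.getLast? = some (l[0]'(by omega)) := by
    rw [hA, List.getLast?_reverse, take_head?]
  have hAhead : A.head? = some (l[k]'(by omega)) := by
    rw [hA, List.head?_reverse, take_getLast?]
  have hBhead : B.head? = some (l[k+1]'hk) := by
    rw [hB, List.drop_eq_getElem_cons hk]; rfl
  have hcAB : (A ++ B).Chain' G.Adj := by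
    unfold List.Chain'; rw [List.isChain_append]
    refine ⟨chain'_reverse_adj (hc.prefix (List.take_prefix _ _)),
      hc.suffix (List.drop_suffix _ _), fun a ha b hb => ?_⟩
    rw [hAlast, Option.mem_some_iff] at ha
    rw [hBhead, Option.mem_some_iff] at hb
    rw [← ha, ← hb]; exact h2
  have hcM : (u :: (A ++ B)).Chain' G.Adj := by
    unfold List.Chain'; rw [List.isChain_cons]
    refine ⟨fun y hy => ?_, hcAB⟩
    rw [List.head?_append, hAhead] at hy
    simp only [Option.some_or, Option.mem_some_iff] at hy
    rw [← hy]; exact h1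
  have hdM : (u :: (A ++ B)).Nodup :=
    List.nodup_cons.mpr ⟨fun h => hu (hperm.subset h), hperm.nodup_iff.mpr hd⟩
  have := path_list_le_pNum _ hcM hdM
  have hlenM : (u :: (A ++ B)).length = l.length + 1 := by
    simp only [List.length_cons, List.length_append, hperm.length_eq]
  omega

lemma key2 [Fintype V] {l : List V} (hc : l.Chain' G.Adj) (hd : l.Nodup)
    (hsmall : cNum G ≤ l.length - 2) {j : ℕ}
    (hj : j + 4 ≤ l.length)
    (h1 : G.Adj (l[l.length - 1]'(by omega)) (l[j]'(by omega)))
    (h2 : G.Adj (l[0]'(by omega)) (l[j+2]'(by omega))) : False := by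
  set A := l.take (j+1) with hA
  set B := (l.drop (j+2)).reverse with hB
  have hBne : B ≠ [] := by
    simp only [hB, ne_eq, List.reverse_eq_nil_iff, ← List.length_pos_iff, List.length_drop]
    omega
  have hAne : A ≠ [] := by
    simp only [hA, ne_eq, ← List.length_pos_iff, List.length_take]
    omega
  have hdropne : l.drop (j+2) ≠ [] := by
    simp only [ne_eq, ← List.length_pos_iff, List.length_drop]; omega
  have hAlast : A.getLast? = some (l[j]'(by omega)) := take_getLast? (by omega)
  have hAhead : A.head? = some (l[0]'(by omega)) := take_head? (by omega)
  have hBhead : B.head? = some (l[l.length - 1]'(by omega)) := by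
    rw [hB, List.head?_reverse]
    have : l = l.take (j+2) ++ l.drop (j+2) := (List.take_append_drop _ _).symm
    calc (l.drop (j+2)).getLast? = l.getLast? := by
          conv_rhs => rw [this]
          rw [List.getLast?_append, List.getLast?_eq_getLast hdropne]
          rfl
    _ = some (l[l.length - 1]'(by omega)) := by
          rw [List.getLast?_eq_getLast (by simp only [ne_eq, ← List.length_pos_iff]; omega),
            List.getLast_eq_getElem]
  have hBlast : B.getLast? = some (l[j+2]'(by omega)) := by
    rw [hB, List.getLast?_reverse, List.head?_eq_getElem?, List.getElem?_drop]
    simp only [Nat.add_zero]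
    rw [List.getElem?_eq_getElem (by omega)]
  have hcC : (A ++ B).Chain' G.Adj := by
    unfold List.Chain'; rw [List.isChain_append]
    refine ⟨hc.prefix (List.take_prefix _ _),
      chain'_reverse_adj (hc.suffix (List.drop_suffix _ _)), fun a ha b hb => ?_⟩
    rw [hAlast, Option.mem_some_iff] at ha
    rw [hBhead, Option.mem_some_iff] at hb
    rw [← ha, ← hb]; exact h1.symm
  have hperm : A ++ B ~ l.eraseIdx (j+1) := by
    rw [List.eraseIdx_eq_take_drop_succ]
    exact List.Perm.append_left A (List.reverse_perm _)
  have hdC : (A ++ B).Nodup := hperm.nodup_iff.mpr ((l.eraseIdx_sublist (j+1)).nodup hd)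
  have hCne : A ++ B ≠ [] := by
    simp only [ne_eq, List.append_eq_nil_iff]
    tauto
  have hlenC : (A ++ B).length = l.length - 1 := by
    rw [hperm.length_eq, List.length_eraseIdx_of_lt (by omega)]
  have hcl : G.Adj ((A ++ B).getLast hCne) ((A ++ B).head hCne) := by
    have e1 : (A ++ B).getLast hCne = l[j+2]'(by omega) := by
      apply Option.some.inj
      rw [← List.getLast?_eq_getLast hCne, List.getLast?_append, hBlast]
      rfl
    have e2 : (A ++ B).head hCne = l[0]'(by omega) := by
      apply Option.some.inj
      rw [← List.head?_eq_head hCne, List.head?_append, hAhead]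
      rfl
    rw [e1, e2]; exact h2.symm
  have := cycle_list_le_cNum (A ++ B) hcC hdC (by omega) hCne hcl
  omega

lemma getElem_congr' {α : Type*} {l : List α} {i k : ℕ} (h : i < l.length) (hik : i = k) :
    l[i]'h = l[k]'(hik ▸ h) := by subst hik; rfl

lemma getElem_reverse' {α : Type*} {l : List α} {i k : ℕ} (h : i < l.length) (hk : k < l.length)
    (hik : i + k = l.length - 1) : l.reverse[i]'(by simpa using h) = l[k]'hk := by
  rw [List.getElem_reverse]
  exact getElem_congr' _ (by omega)


end Helpers

open List

/-- If `G` is a connected graph on `n` vertices with `σ₃(G) ≥ n` and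
`p(G) ≤ n - 1`, then `c(G) = p(G) - 1`. -/
theorem stmt_3 {V : Type*} [Fintype V] (G : SimpleGraph V) [DecidableRel G.Adj]
    (hconn : G.Connected)
    (hσ₃ : ∀ x y z : V, x ≠ y → x ≠ z → y ≠ z →
      ¬ G.Adj x y → ¬ G.Adj x z → ¬ G.Adj y z →
      Fintype.card V ≤ G.degree x + G.degree y + G.degree z)
    (hp : pNum G ≤ Fintype.card V - 1) :
    cNum G = pNum G - 1 := by
  classical
  have hV : Nonempty V := hconn.nonempty
  have hn1 : 1 ≤ Fintype.card V := Fintype.card_pos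
  obtain ⟨L, hc, hd, hne, hlen⟩ := exists_longest_list G
  have hLpos : 0 < L.length := List.length_pos_iff.mpr hne
  have hLcard : L.length ≤ Fintype.card V - 1 := le_trans (le_of_eq hlen) hp
  have hout : ∃ u, u ∉ L := by
    by_contra h
    push_neg at h
    have huniv : L.toFinset = Finset.univ :=
      Finset.eq_univ_iff_forall.mpr fun x => List.mem_toFinset.mpr (h x)
    have : Fintype.card V = L.length := by
      rw [← Finset.card_univ, ← huniv, List.toFinset_card_of_nodup hd]
    omega
  have hp3 : 3 ≤ L.length := by
    by_contra hcon
    push_neg at hcon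
    obtain ⟨u, hu⟩ := hout
    obtain ⟨x, y, hx, hy, hxy⟩ := exists_boundary hconn hu (L.head_mem hne)
    obtain ⟨i, hi, rfl⟩ := List.mem_iff_getElem.mp hy
    rcases Nat.lt_or_ge i 1 with h1 | h1
    · have hi0 : i = 0 := by omega
      exact ext_head hc hd hlen hLpos hx (getElem_congr' hi hi0 ▸ hxy)
    · have hil : i = L.length - 1 := by omega
      exact ext_last hc hd hlen hLpos hx (getElem_congr' hi hil ▸ hxy)
  -- the main (hard) direction
  have hge : L.length - 1 ≤ cNum G := by
    by_contra hcon
    push_neg at hcon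
    have hsmall : cNum G ≤ L.length - 2 := by omega
    have h0 : 0 < L.length := hLpos
    have hlast : L.length - 1 < L.length := by omega
    set y1 := L[0]'h0 with hy1def
    set yp := L[L.length - 1]'hlast with hypdef
    have hy1L : y1 ∈ L := List.getElem_mem _
    have hypL : yp ∈ L := List.getElem_mem _
    have hy1yp : ¬ G.Adj y1 yp := by
      intro h
      have hcl : G.Adj (L.getLast hne) (L.head hne) := by
        rw [List.getLast_eq_getElem, ← List.getElem_zero h0]
        exact h.symm
      have := cycle_list_le_cNum L hc hd (by omega) hne hcl
      omega
    obtain ⟨u, hu⟩ := hout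
    have hu1 : ¬ G.Adj u y1 := fun h => ext_head hc hd hlen h0 hu h
    have hup : ¬ G.Adj u yp := fun h => ext_last hc hd hlen h0 hu h
    have hNy1 : ∀ z, G.Adj y1 z → z ∈ L := by
      intro z hz
      by_contra hzL
      exact ext_head hc hd hlen h0 hzL hz.symm
    have hNyp : ∀ z, G.Adj yp z → z ∈ L := by
      intro z hz
      by_contra hzL
      exact ext_last hc hd hlen h0 hzL hz.symm
    have idx_lt : ∀ z ∈ L, L.idxOf z < L.length := fun z hz => List.idxOf_lt_length_iff.mpr hz
    have idx_get : ∀ z (hz : z ∈ L), L[L.idxOf z]'(idx_lt z hz) = z :=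
      fun z hz => List.getElem_idxOf (idx_lt z hz)
    have idx_ne0 : ∀ z (hz : z ∈ L), z ≠ y1 → 1 ≤ L.idxOf z := by
      intro z hz hzne
      rcases Nat.eq_zero_or_pos (L.idxOf z) with h | h
      · exact absurd ((idx_get z hz).symm.trans (getElem_congr' _ h)) hzne
      · exact h
    have idx_nelast : ∀ z (hz : z ∈ L), z ≠ yp → L.idxOf z ≤ L.length - 2 := by
      intro z hz hzne
      rcases Nat.lt_or_ge (L.idxOf z) (L.length - 1) with h | h
      · omega
      · have : L.idxOf z = L.length - 1 := by have := idx_lt z hz; omega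
        exact absurd ((idx_get z hz).symm.trans (getElem_congr' _ this)) hzne
    set Lf := L.toFinset with hLfdef
    have hLfcard : Lf.card = L.length := List.toFinset_card_of_nodup hd
    set SA := (G.neighborFinset y1).image (fun z => L.idxOf z - 1) with hSAdef
    set SB := (G.neighborFinset yp).image (fun z => L.idxOf z + 1) with hSBdef
    set ST := ((G.neighborFinset u).filter (· ∈ Lf)).image (fun z => L.idxOf z) with hSTdef
    -- membership characterizations
    have memSA : ∀ k ∈ SA, ∃ hk : k + 1 ≤ L.length - 2, G.Adj y1 (L[k+1]'(by omega)) := by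
      intro k hk
      obtain ⟨z, hz, hzk⟩ := Finset.mem_image.mp hk
      rw [SimpleGraph.mem_neighborFinset] at hz
      have hzL := hNy1 z hz
      have h1 := idx_ne0 z hzL hz.ne'
      have h2 := idx_nelast z hzL (fun h => hy1yp (h ▸ hz))
      have hik : L.idxOf z = k + 1 := by omega
      refine ⟨by omega, ?_⟩
      have := idx_get z hzL
      rw [getElem_congr' (idx_lt z hzL) hik] at this
      rw [this]
      exact hz
    have memSB : ∀ k ∈ SB, ∃ hk : 2 ≤ k ∧ k ≤ L.length - 1, G.Adj yp (L[k-1]'(by omega)) := by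
      intro k hk
      obtain ⟨z, hz, hzk⟩ := Finset.mem_image.mp hk
      rw [SimpleGraph.mem_neighborFinset] at hz
      have hzL := hNyp z hz
      have h1 := idx_ne0 z hzL (fun h => hy1yp (h ▸ hz).symm)
      have h2 := idx_nelast z hzL hz.ne'
      have hik : L.idxOf z = k - 1 := by omega
      refine ⟨⟨by omega, by omega⟩, ?_⟩
      have := idx_get z hzL
      rw [getElem_congr' (idx_lt z hzL) hik] at this
      rw [this]
      exact hz
    have memST : ∀ k ∈ ST, ∃ hk : 1 ≤ k ∧ k ≤ L.length - 2, G.Adj u (L[k]'(by omega)) := by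
      intro k hk
      obtain ⟨z, hz, hzk⟩ := Finset.mem_image.mp hk
      rw [Finset.mem_filter, SimpleGraph.mem_neighborFinset] at hz
      obtain ⟨hz, hzLf⟩ := hz
      have hzL : z ∈ L := List.mem_toFinset.mp hzLf
      have h1 := idx_ne0 z hzL (fun h => hu1 (h ▸ hz))
      have h2 := idx_nelast z hzL (fun h => hup (h ▸ hz))
      have hik : L.idxOf z = k := hzk
      refine ⟨⟨by omega, by omega⟩, ?_⟩
      have := idx_get z hzL
      rw [getElem_congr' (idx_lt z hzL) hik] at this
      rw [this]
      exact hz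
    -- disjointness
    have hdisj2 : Disjoint SA ST := by
      rw [Finset.disjoint_left]
      intro k hkA hkT
      obtain ⟨hk1, hadj1⟩ := memSA k hkA
      obtain ⟨hk2, hadj2⟩ := memST k hkT
      exact key1 hc hd hlen hu (by omega) hadj2 hadj1
    have hdisj3 : Disjoint SB ST := by
      rw [Finset.disjoint_left]
      intro k hkB hkT
      obtain ⟨⟨hk1, hk1'⟩, hadj1⟩ := memSB k hkB
      obtain ⟨⟨hk2, hk2'⟩, hadj2⟩ := memST k hkT
      have hrc : L.reverse.Chain' G.Adj := chain'_reverse_adj hc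
      have hrd : L.reverse.Nodup := List.nodup_reverse.mpr hd
      have hrlen : L.reverse.length = pNum G := by simpa using hlen
      have hru : u ∉ L.reverse := by simpa using hu
      refine key1 hrc hrd hrlen hru
        (show (L.length - 1 - k) + 1 < L.reverse.length by simp; omega) ?_ ?_
      · rw [getElem_reverse' (by omega) (by omega) (by omega : (L.length - 1 - k) + k = L.length - 1)]
        exact hadj2
      · have e0 : L.reverse[0]'(by simp; omega) = yp := by
          rw [getElem_reverse' (by omega) (by omega) (by omega : 0 + (L.length - 1) = L.length - 1)]
        rw [getElem_reverse' (by omega : L.length - 1 - k + 1 < L.length) (by omega : k - 1 < L.length)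
          (by omega : (L.length - 1 - k + 1) + (k - 1) = L.length - 1)]
        rw [e0]
        exact hadj1
    have hdisj1 : Disjoint SA SB := by
      rw [Finset.disjoint_left]
      intro k hkA hkB
      obtain ⟨hk1, hadj1⟩ := memSA k hkA
      obtain ⟨⟨hk2, hk2'⟩, hadj2⟩ := memSB k hkB
      refine key2 hc hd hsmall (show (k-1) + 4 ≤ L.length by omega) ?_ ?_
      · exact getElem_congr' _ rfl ▸ hadj2
      · rw [getElem_congr' (by omega : k - 1 + 2 < L.length) (by omega : k - 1 + 2 = k + 1)]
        exact hadj1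
    -- cardinalities
    have cardSA : SA.card = G.degree y1 := by
      rw [hSAdef, Finset.card_image_of_injOn, SimpleGraph.card_neighborFinset_eq_degree]
      intro z1 h1 z2 h2 heq
      rw [Finset.mem_coe, SimpleGraph.mem_neighborFinset] at h1 h2
      have m1 := hNy1 _ h1
      have m2 := hNy1 _ h2
      have i1 := idx_ne0 _ m1 h1.ne'
      have i2 := idx_ne0 _ m2 h2.ne'
      have heq' : L.idxOf z1 - 1 = L.idxOf z2 - 1 := heq
      exact (List.idxOf_inj m1).mp (by omega)
    have cardSB : SB.card = G.degree yp := by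
      rw [hSBdef, Finset.card_image_of_injOn, SimpleGraph.card_neighborFinset_eq_degree]
      intro z1 h1 z2 h2 heq
      rw [Finset.mem_coe, SimpleGraph.mem_neighborFinset] at h1 h2
      have heq' : L.idxOf z1 + 1 = L.idxOf z2 + 1 := heq
      exact (List.idxOf_inj (hNyp _ h1)).mp (by omega)
    have cardST : ST.card = ((G.neighborFinset u).filter (· ∈ Lf)).card := by
      rw [hSTdef, Finset.card_image_of_injOn]
      intro z1 h1 z2 h2 heq
      rw [Finset.mem_coe, Finset.mem_filter] at h1 h2
      exact (List.idxOf_inj (List.mem_toFinset.mp h1.2)).mp heq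
    -- union bound
    have hsub : SA ∪ SB ∪ ST ⊆ Finset.range L.length := by
      intro k hk
      rw [Finset.mem_union, Finset.mem_union] at hk
      rw [Finset.mem_range]
      rcases hk with (hk | hk) | hk
      · obtain ⟨h, -⟩ := memSA k hk; omega
      · obtain ⟨⟨-, h⟩, -⟩ := memSB k hk; omega
      · obtain ⟨⟨-, h⟩, -⟩ := memST k hk; omega
    have hcount : SA.card + SB.card + ST.card ≤ L.length := by
      have e1 : (SA ∪ SB ∪ ST).card = SA.card + SB.card + ST.card := by
        rw [Finset.card_union_of_disjoint, Finset.card_union_of_disjoint hdisj1]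
        exact Finset.disjoint_union_left.mpr ⟨hdisj2, hdisj3⟩
      calc SA.card + SB.card + ST.card = (SA ∪ SB ∪ ST).card := e1.symm
        _ ≤ (Finset.range L.length).card := Finset.card_le_card hsub
        _ = L.length := Finset.card_range _
    -- degree of u decomposition
    have hdegu : G.degree u ≤ ST.card + (Fintype.card V - L.length - 1) := by
      have hsplit := Finset.card_filter_add_card_filter_not
        (s := G.neighborFinset u) (p := (· ∈ Lf))
      have hsub2 : (G.neighborFinset u).filter (fun z => ¬ z ∈ Lf) ⊆
          (Finset.univ \ Lf).erase u := by
        intro z hz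
        rw [Finset.mem_filter, SimpleGraph.mem_neighborFinset] at hz
        rw [Finset.mem_erase, Finset.mem_sdiff]
        exact ⟨hz.1.ne', Finset.mem_univ z, hz.2⟩
      have hcard2 : ((Finset.univ \ Lf).erase u).card = Fintype.card V - L.length - 1 := by
        rw [Finset.card_erase_of_mem, Finset.card_sdiff_of_subset (Finset.subset_univ _),
          Finset.card_univ, hLfcard]
        rw [Finset.mem_sdiff]
        exact ⟨Finset.mem_univ u, fun h => hu (List.mem_toFinset.mp h)⟩
      have := Finset.card_le_card hsub2
      rw [SimpleGraph.degree]
      omega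
    have hney1 : u ≠ y1 := fun h => hu (h ▸ hy1L)
    have hneyp : u ≠ yp := fun h => hu (h ▸ hypL)
    have hy1nyp : y1 ≠ yp := by
      rw [hy1def, hypdef]
      intro h
      have := (hd.getElem_inj_iff).mp h
      omega
    have hdeg := hσ₃ u y1 yp hney1 hneyp hy1nyp hu1 hup hy1yp
    omega
  -- the easy direction : cNum ≤ pNum - 1
  have hle : cNum G ≤ L.length - 1 := by
    rcases Set.eq_empty_or_nonempty
      {n | ∃ (a : V) (w : G.Walk a a), w.IsCycle ∧ n = w.length} with hS | hS
    · have : cNum G = 0 := by rw [cNum, hS]; simp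
      omega
    · have hmem : cNum G ∈ {n | ∃ (a : V) (w : G.Walk a a), w.IsCycle ∧ n = w.length} :=
        Nat.sSup_mem hS (bddAbove_cSet G)
      obtain ⟨a, w, hw, hwl⟩ := hmem
      cases w with
      | nil => exact absurd hw (by simp [Walk.isCycle_def])
      | @cons _ b _ hab q =>
        rw [Walk.length_cons] at hwl
        have hql : q.support.length = cNum G := by
          rw [Walk.length_support, hwl]
        have hqc : q.support.Chain' G.Adj := Walk.isChain_adj_support q
        have hqd : q.support.Nodup := by
          have := hw.2
          rwa [Walk.support_cons, List.tail_cons] at this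
        have hqne : q.support ≠ [] := q.support_ne_nil
        set l := q.support with hldef
        have hlh : l.head hqne = b := Walk.head_support q
        have hll : l.getLast hqne = a := Walk.getLast_support q
        have hclq : G.Adj (l.getLast hqne) (l.head hqne) := by
          rw [hlh, hll]; exact hab
        -- if l covers all vertices, contradiction with pNum ≤ card - 1
        have hlsmall : ∃ x, x ∉ l := by
          by_contra h
          push_neg at h
          have huniv : l.toFinset = Finset.univ :=
            Finset.eq_univ_iff_forall.mpr fun x => List.mem_toFinset.mpr (h x)
          have hcard : Fintype.card V = l.length := by
            rw [← Finset.card_univ, ← huniv, List.toFinset_card_of_nodup hqd]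
          have := path_list_le_pNum l hqc hqd
          omega
        obtain ⟨x0, hx0⟩ := hlsmall
        obtain ⟨x, y, hx, hy, hxy⟩ := exists_boundary hconn hx0 (l.head_mem hqne)
        obtain ⟨l1, l2, hsplit⟩ := List.append_of_mem hy
        -- new path : x :: (y :: l2) ++ l1
        have hsuf : (y :: l2) <:+ l := ⟨l1, hsplit.symm⟩
        have hpre : l1 <+: l := ⟨y :: l2, hsplit.symm⟩
        have hchain : ((y :: l2) ++ l1).Chain' G.Adj := by
          unfold List.Chain'; rw [List.isChain_append]
          refine ⟨hqc.suffix hsuf, hqc.prefix hpre, fun c hc1 d hd1 => ?_⟩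
          have hl1ne : l1 ≠ [] := by
            intro h
            rw [h] at hd1
            simp at hd1
          have hLlast : l.getLast? = some c := by
            rw [hsplit, List.getLast?_append, Option.mem_def.mp hc1]
            simp
          have hLhead : l.head? = some d := by
            rw [hsplit, List.head?_append, Option.mem_def.mp hd1]
            simp
          have hc1' : c = l.getLast hqne := by
            have h' := List.getLast?_eq_getLast (l := l) hqne
            rw [hLlast] at h'
            exact Option.some.inj h'
          have hd1' : d = l.head hqne := by
            have h' := List.head?_eq_head hqne
            rw [hLhead] at h'
            exact Option.some.inj h'
          rw [hc1', hd1']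
          exact hclq
        have hchain2 : (x :: ((y :: l2) ++ l1)).Chain' G.Adj := by
          unfold List.Chain'; rw [List.isChain_cons]
          exact ⟨fun c hc1 => by simp only [List.head?_append, List.head?_cons,
            Option.some_or, Option.mem_some_iff] at hc1; rw [← hc1]; exact hxy, hchain⟩
        have hperm : (y :: l2) ++ l1 ~ l := by
          rw [hsplit]
          exact List.perm_append_comm
        have hnodup : (x :: ((y :: l2) ++ l1)).Nodup :=
          List.nodup_cons.mpr ⟨fun h => hx (hperm.subset h), hperm.nodup_iff.mpr hqd⟩
        have := path_list_le_pNum _ hchain2 hnodup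
        have hlenM : (x :: ((y :: l2) ++ l1)).length = l.length + 1 := by
          simp only [List.length_cons, hperm.length_eq]
        omega
  omega
end

section
/- Let G be a connected graph on n vertices with σ₃(G) ≥ n and p(G) ≤ n-1. If C is a longest cycle of G, then for every vertex v in V(G) \ V(C), every neighbor of v lies on C. -/
open SimpleGraph

section Helpers

open List

variable {V : Type*} {G : SimpleGraph V}

/-- Build a walk from a chain of adjacencies. -/
lemma exists_walk_of_chain (x : V) (l : List V) (h : List.Chain G.Adj x l) :
    ∃ (y : V) (w : G.Walk x y), w.support = x :: l := by
  induction l generalizing x with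
  | nil => exact ⟨x, .nil, rfl⟩
  | cons b t ih =>
    obtain ⟨hadj, hch⟩ := List.isChain_cons_cons.mp h
    obtain ⟨y, w, hs⟩ := ih b hch
    exact ⟨y, .cons hadj w, by simp [hs]⟩

lemma walk_support_getLast? {u v : V} (w : G.Walk u v) : w.support.getLast? = some v := by
  induction w with
  | nil => rfl
  | cons h p ih =>
    rw [SimpleGraph.Walk.support_cons, SimpleGraph.Walk.support_eq_cons p,
      List.getLast?_cons_cons, ← SimpleGraph.Walk.support_eq_cons p]
    exact ih


lemma pNum_bddAbove [Fintype V] :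
    ∀ n ∈ {n | ∃ (a b : V) (w : G.Walk a b), w.IsPath ∧ n = w.length + 1}, n ≤ Fintype.card V := by
  rintro n ⟨a, b, w, hw, rfl⟩
  have := List.Nodup.length_le_card (l := w.support) hw.2
  simpa [SimpleGraph.Walk.length_support] using this

lemma list_le_pNum [Fintype V] (Q : List V) (hch : Q.Chain' G.Adj) (hnd : Q.Nodup)
    (hne : Q ≠ []) : Q.length ≤ pNum G := by
  obtain ⟨x, t, rfl⟩ := List.exists_cons_of_ne_nil hne
  obtain ⟨y, w, hs⟩ := exists_walk_of_chain x t hch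
  have hpath : w.IsPath := by rw [SimpleGraph.Walk.isPath_def, hs]; exact hnd
  have hmem : (x :: t).length ∈
      {n | ∃ (a b : V) (w : G.Walk a b), w.IsPath ∧ n = w.length + 1} := by
    refine ⟨x, y, w, hpath, ?_⟩
    have h2 := congrArg List.length hs
    rw [SimpleGraph.Walk.length_support] at h2
    simp only [List.length_cons] at h2 ⊢
    omega
  exact le_csSup ⟨Fintype.card V, pNum_bddAbove⟩ hmem

lemma path_edge_not_mem {u v : V} (w : G.Walk u v) (hw : w.IsPath) (hl : 2 ≤ w.length) :
    s(v, u) ∉ w.edges := by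
  cases w with
  | nil => simp at hl
  | @cons _ b _ h p =>
    rw [SimpleGraph.Walk.cons_isPath_iff] at hw
    intro hmem
    rw [SimpleGraph.Walk.edges_cons, List.mem_cons] at hmem
    rcases hmem with heq | hmem
    · rw [Sym2.eq_iff] at heq
      rcases heq with ⟨rfl, rfl⟩ | ⟨rfl, -⟩
      · exact hw.2 p.end_mem_support
      · have := SimpleGraph.Walk.isPath_iff_eq_nil.mp hw.1
        subst this
        simp at hl
    · exact hw.2 (SimpleGraph.Walk.snd_mem_support_of_mem_edges p hmem)

lemma exists_cycle_of_list (K : List V) (hch : K.Chain' G.Adj) (hnd : K.Nodup)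
    (hcl : ∀ xh ∈ K.head?, ∀ yl ∈ K.getLast?, G.Adj yl xh) (hlen : 3 ≤ K.length) :
    ∃ (b : V) (D : G.Walk b b), D.IsCycle ∧ D.length = K.length := by
  obtain ⟨x, t, rfl⟩ := List.exists_cons_of_ne_nil (l := K) (by rintro rfl; simp at hlen)
  obtain ⟨y, w, hs⟩ := exists_walk_of_chain x t hch
  have hys : (x :: t).getLast? = some y := by rw [← hs]; exact walk_support_getLast? w
  have hadj : G.Adj y x := hcl x rfl y hys
  have hpath : w.IsPath := by rw [SimpleGraph.Walk.isPath_def, hs]; exact hnd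
  have hwl : w.length = t.length := by
    have := congrArg List.length hs
    rw [SimpleGraph.Walk.length_support] at this
    simp only [List.length_cons] at this
    omega
  refine ⟨x, w.concat hadj, ?_, by simp [hwl]⟩
  rw [SimpleGraph.Walk.isCycle_def]
  refine ⟨⟨?_⟩, ?_, ?_⟩
  · rw [SimpleGraph.Walk.edges_concat]
    rw [List.concat_eq_append, List.nodup_append]
    refine ⟨hpath.isTrail.edges_nodup, List.nodup_singleton _, ?_⟩
    intro e he e' he'
    simp only [List.mem_singleton] at he'
    subst he'
    exact fun h => path_edge_not_mem w hpath (by simp only [List.length_cons] at hlen; omega) (h ▸ he)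
  · intro hnil
    have := congrArg SimpleGraph.Walk.length hnil
    rw [SimpleGraph.Walk.length_concat] at this
    simp at this
  · rw [SimpleGraph.Walk.support_concat, hs]
    simp only [List.concat_eq_append, List.cons_append, List.tail_cons]
    rw [List.nodup_append]
    rw [List.nodup_cons] at hnd
    refine ⟨hnd.2, List.nodup_singleton _, fun b hb c hc => ?_⟩
    rw [List.mem_singleton] at hc
    subst hc
    rintro rfl
    exact hnd.1 hb

lemma pNum_spec [Fintype V] [Nonempty V] (G : SimpleGraph V) :
    ∃ (a b : V) (w : G.Walk a b), w.IsPath ∧ pNum G = w.length + 1 := by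
  have hne : {n | ∃ (a b : V) (w : G.Walk a b), w.IsPath ∧ n = w.length + 1}.Nonempty := by
    obtain ⟨a⟩ := ‹Nonempty V›
    exact ⟨1, a, a, .nil, SimpleGraph.Walk.IsPath.nil, rfl⟩
  exact Nat.sSup_mem hne ⟨Fintype.card V, pNum_bddAbove⟩

section ListUtil
variable {α : Type*}

lemma nodup_reverse_append {l₁ l₂ : List α} (h : (l₁ ++ l₂).Nodup) : (l₁.reverse ++ l₂).Nodup := by
  rw [List.nodup_append] at h ⊢
  exact ⟨List.nodup_reverse.mpr h.1, h.2.1, fun a ha b hb => h.2.2 a (List.mem_reverse.mp ha) b hb⟩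

lemma getLast?_take' {l : List α} {i : ℕ} (h1 : 1 ≤ i) (h2 : i ≤ l.length) :
    (l.take i).getLast? = l[i-1]? := by
  rw [List.getLast?_eq_getElem?, List.length_take]
  have hmin : min i l.length = i := Nat.min_eq_left h2
  rw [hmin, List.getElem?_take_of_lt (by omega)]

lemma head?_drop' {l : List α} (i : ℕ) : (l.drop i).head? = l[i]? := by
  rw [List.head?_eq_getElem?, List.getElem?_drop]
  simp

lemma getLast?_drop' {l : List α} {i : ℕ} (h : i < l.length) :
    (l.drop i).getLast? = l.getLast? := by
  rw [List.getLast?_eq_getElem?, List.getLast?_eq_getElem?, List.getElem?_drop, List.length_drop]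
  congr 1
  omega

end ListUtil

lemma exists_entry [DecidableEq V] {b : V} (Cs : List V) (u : V) (W : G.Walk u b)
    (hb : b ∈ Cs) (hu : u ∉ Cs) :
    ∃ (x : V) (P : G.Walk u x), P.IsPath ∧ x ∈ Cs ∧ ∀ y ∈ P.support, y ≠ x → y ∉ Cs := by
  induction W with
  | nil => exact absurd hb hu
  | @cons u m b h W' ih =>
    by_cases hm : m ∈ Cs
    · refine ⟨m, .cons h .nil, ?_, hm, ?_⟩
      · rw [SimpleGraph.Walk.isPath_def]
        simp [h.ne]
      · intro y hy hne
        simp only [SimpleGraph.Walk.support_cons, SimpleGraph.Walk.support_nil,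
          List.mem_cons, List.mem_singleton] at hy
        rcases hy with rfl | rfl | h0
        · exact hu
        · exact absurd rfl hne
        · simp at h0
    · obtain ⟨x, P, hP, hx, hprop⟩ := ih hb hm
      refine ⟨x, (SimpleGraph.Walk.cons h P).bypass, SimpleGraph.Walk.bypass_isPath _, hx, ?_⟩
      intro y hy hne
      have hy' := SimpleGraph.Walk.support_bypass_subset _ hy
      rw [SimpleGraph.Walk.support_cons, List.mem_cons] at hy'
      rcases hy' with rfl | hy'
      · exact hu
      · exact hprop y hy' hne

lemma cplus2_le_pNum [Fintype V] [DecidableEq V] (hconn : G.Connected)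
    {a v w0 : V} (C : G.Walk a a) (hC : C.IsCycle)
    (hv : v ∉ C.support) (hw0 : w0 ∉ C.support) (hvw : G.Adj v w0) :
    C.length + 2 ≤ pNum G := by
  obtain ⟨W⟩ := hconn.preconnected v a
  obtain ⟨x, P₂, hP₂, hxC, hoff⟩ := exists_entry C.support v W C.start_mem_support hv
  -- the rotated cycle list K
  have hc3 : 3 ≤ C.length := hC.three_le_length
  set C' := C.rotate x hxC with hC'def
  have hC' : C'.IsCycle := hC.rotate hxC
  have hlenC' : C'.length = C.length := by
    have hts := congrArg SimpleGraph.Walk.length (C.take_spec hxC)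
    rw [SimpleGraph.Walk.length_append] at hts
    have h6 : C'.length = (C.dropUntil x hxC).length + (C.takeUntil x hxC).length := by
      rw [hC'def]
      unfold SimpleGraph.Walk.rotate
      rw [SimpleGraph.Walk.length_append]
    omega
  set K := C'.support.dropLast with hKdef
  have hsuppC' : C'.support.getLast? = some x := walk_support_getLast? _
  have hKx : C'.support = K ++ [x] := (List.dropLast_append_getLast? x hsuppC').symm
  have hKlen : K.length = C.length := by
    have h1 := C'.length_support
    rw [hKdef, List.length_dropLast, h1, hlenC']
    omega
  have hKne : K ≠ [] := by
    intro h
    rw [h] at hKlen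
    simp at hKlen
    omega
  have hKchain : K.Chain' G.Adj := by
    have h1 := C'.isChain_adj_support
    rw [hKx, List.isChain_append] at h1
    exact h1.1
  obtain ⟨k0, K', hKcons⟩ := List.exists_cons_of_ne_nil hKne
  have hk0 : k0 = x := by
    have h1 : C'.support.head? = some x := by rw [C'.support_eq_cons]; rfl
    rw [hKx, hKcons] at h1
    simpa using h1
  have hKnodup : K.Nodup := by
    have h1 := hC'.support_nodup
    have h2 : C'.support.tail = K' ++ [x] := by
      rw [hKx, hKcons]
      rfl
    rw [h2, List.nodup_append] at h1
    rw [hKcons, hk0, List.nodup_cons]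
    exact ⟨fun hx' => h1.2.2 x hx' x (List.mem_singleton.mpr rfl) rfl, h1.1⟩
  have hKsub : ∀ y ∈ K, y ∈ C.support := by
    intro y hy
    have hy' : y ∈ C'.support := by rw [hKx]; exact List.mem_append_left _ hy
    rw [C'.support_eq_cons, List.mem_cons] at hy'
    rcases hy' with rfl | hy'
    · exact hxC
    · have hrot := C.support_rotate x hxC
      have : y ∈ C.support.tail := (hrot.mem_iff).mp hy'
      rw [C.support_eq_cons]
      exact List.mem_cons_of_mem _ this
  have hKhead : K.head? = some x := by rw [hKcons, hk0]; rfl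
  -- the front list Lf
  have hfront : ∃ Lf : List V, Lf.Chain' G.Adj ∧ Lf.Nodup ∧ 2 ≤ Lf.length ∧
      (∀ y ∈ Lf, y ∉ C.support) ∧ (∀ z ∈ Lf.getLast?, G.Adj z x) := by
    have hsupP : P₂.support.getLast? = some x := walk_support_getLast? _
    by_cases h2 : 2 ≤ P₂.length
    · refine ⟨P₂.support.dropLast, ?_, ?_, ?_, ?_, ?_⟩
      · have h1 := P₂.isChain_adj_support
        rw [(List.dropLast_append_getLast? x hsupP).symm, List.isChain_append] at h1
        exact h1.1
      · have h1 := hP₂.support_nodup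
        rw [(List.dropLast_append_getLast? x hsupP).symm, List.nodup_append] at h1
        exact h1.1
      · rw [List.length_dropLast, P₂.length_support]
        omega
      · intro y hy
        have h1 := hP₂.support_nodup
        rw [(List.dropLast_append_getLast? x hsupP).symm, List.nodup_append] at h1
        have hyx : y ≠ x := fun h => h1.2.2 y hy x (List.mem_singleton.mpr rfl) h
        refine hoff y ?_ hyx
        rw [(List.dropLast_append_getLast? x hsupP).symm]
        exact List.mem_append_left _ hy
      · have h1 := P₂.isChain_adj_support
        rw [(List.dropLast_append_getLast? x hsupP).symm, List.isChain_append] at h1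
        intro z hz
        exact h1.2.2 z hz x rfl
    · -- P₂.length = 1, so v is adjacent to x; use [w0, v]
      have hvx : v ≠ x := fun h => hv (h ▸ hxC)
      have hlen1 : P₂.length = 1 := by
        by_contra h
        have h0 : P₂.length = 0 := by omega
        exact hvx (SimpleGraph.Walk.eq_of_length_eq_zero h0)
      have hadjvx : G.Adj v x := SimpleGraph.Walk.adj_of_length_eq_one hlen1
      refine ⟨[w0, v], ?_, ?_, ?_, ?_, ?_⟩
      · exact List.isChain_cons_cons.mpr ⟨hvw.symm, List.isChain_singleton _⟩
      · simp [hvw.ne']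
      · simp
      · intro y hy
        simp only [List.mem_cons, List.mem_singleton, List.not_mem_nil, or_false] at hy
        rcases hy with rfl | rfl
        · exact hw0
        · exact hv
      · intro z hz
        simp only [List.getLast?_cons_cons, List.getLast?_singleton, Option.mem_def,
          Option.some.injEq] at hz
        subst hz
        exact hadjvx
  obtain ⟨Lf, hLfch, hLfnd, hLflen, hLfoff, hLfj⟩ := hfront
  have hQch : (Lf ++ K).Chain' G.Adj := by
    unfold List.Chain'
    rw [List.isChain_append]
    refine ⟨hLfch, hKchain, fun z hz y hy => ?_⟩
    rw [hKhead, Option.mem_def, Option.some.injEq] at hy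
    subst hy
    exact hLfj z hz
  have hQnd : (Lf ++ K).Nodup := by
    rw [List.nodup_append]
    exact ⟨hLfnd, hKnodup, fun y hy y' hy' h => by subst h; exact hLfoff y hy (hKsub y hy')⟩
  have := list_le_pNum (Lf ++ K) hQch hQnd
    (fun h => hKne (List.append_eq_nil_iff.mp h).2)
  rw [List.length_append, hKlen] at this
  omega

lemma nodup_append_reverse {α : Type*} {l₁ l₂ : List α} (h : (l₁ ++ l₂).Nodup) :
    (l₁ ++ l₂.reverse).Nodup := by
  rw [List.nodup_append] at h ⊢
  exact ⟨h.1, List.nodup_reverse.mpr h.2.1, fun a ha b hb => h.2.2 a ha b (List.mem_reverse.mp hb)⟩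


end Helpers

/-- Let `G` be a connected graph on `n` vertices with `σ₃(G) ≥ n` and
`p(G) ≤ n - 1`. If `C` is a longest cycle of `G`, then every neighbor of a vertex
not on `C` lies on `C`. -/
theorem stmt_4 {V : Type*} [Fintype V] (G : SimpleGraph V) [DecidableRel G.Adj]
    (hconn : G.Connected)
    (hσ₃ : ∀ x y z : V, x ≠ y → x ≠ z → y ≠ z →
      ¬ G.Adj x y → ¬ G.Adj x z → ¬ G.Adj y z →
      Fintype.card V ≤ G.degree x + G.degree y + G.degree z)
    (hp : pNum G ≤ Fintype.card V - 1)
    (a : V) (C : G.Walk a a) (hC : C.IsCycle)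
    (hlongest : ∀ (b : V) (D : G.Walk b b), D.IsCycle → D.length ≤ C.length) :
    ∀ v : V, v ∉ C.support → ∀ w : V, G.Adj v w → w ∈ C.support := by
  classical
  intro v hv w hvw
  by_contra hw
  set n := Fintype.card V with hn
  clear_value n
  have hc3 : 3 ≤ C.length := hC.three_le_length
  have hc2 : C.length + 2 ≤ pNum G := cplus2_le_pNum hconn C hC hv hw hvw
  have hnonempty : Nonempty V := ⟨a⟩
  obtain ⟨u₁, u₂, P, hP, hPlen⟩ := pNum_spec G
  set p := pNum G with hpdef
  set L := P.support with hLdef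
  have hLlen : L.length = p := by rw [hLdef, P.length_support]; omega
  have hLnd : L.Nodup := hP.support_nodup
  have hLch : L.Chain' G.Adj := P.isChain_adj_support
  have hp5 : 5 ≤ p := by omega
  have hheadL : L.head? = some u₁ := by rw [hLdef, P.support_eq_cons]; rfl
  have hlastL : L.getLast? = some u₂ := walk_support_getLast? P
  -- vertex access function
  set g : ℕ → V := fun i => L.getD i u₁ with hgdef
  have hgget : ∀ i (hi : i < p), g i = L[i]'(by omega) := by
    intro i hi
    rw [hgdef]
    exact List.getD_eq_getElem L u₁ (by omega)
  have hgsome : ∀ i, i < p → L[i]? = some (g i) := by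
    intro i hi
    rw [List.getElem?_eq_getElem (by omega : i < L.length), hgget i hi]
  have hg0 : g 0 = u₁ := by
    have h2 := hgsome 0 (by omega)
    rw [← List.head?_eq_getElem?, hheadL] at h2
    exact (Option.some.injEq _ _ ▸ h2).symm
  have hgl : g (p-1) = u₂ := by
    have h1 := hlastL
    rw [List.getLast?_eq_getElem?, hLlen, hgsome (p-1) (by omega)] at h1
    simpa using h1
  have ginj : ∀ i j, i < p → j < p → g i = g j → i = j := by
    intro i j hi hj heq
    rw [hgget i hi, hgget j hj] at heq
    exact (List.Nodup.getElem_inj_iff hLnd).mp heq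
  have hgmem : ∀ i, i < p → g i ∈ L := by
    intro i hi
    rw [hgget i hi]
    exact List.getElem_mem _
  have hidx : ∀ y ∈ L, ∃ i, i < p ∧ g i = y := by
    intro y hy
    obtain ⟨i, hi, hiy⟩ := List.mem_iff_getElem.mp hy
    exact ⟨i, by omega, by rw [hgget i (by omega)]; exact hiy⟩
  -- maximality and no long cycles
  have hmax : ∀ (Q : List V), Q.Chain' G.Adj → Q.Nodup → Q ≠ [] → Q.length ≤ p :=
    fun Q h1 h2 h3 => list_le_pNum Q h1 h2 h3
  have hnocyc : ∀ (Kl : List V), Kl.Chain' G.Adj → Kl.Nodup →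
      (∀ xh ∈ Kl.head?, ∀ yl ∈ Kl.getLast?, G.Adj yl xh) → 3 ≤ Kl.length →
      Kl.length ≤ C.length := by
    intro Kl h1 h2 h3 h4
    obtain ⟨b, D, hD, hDlen⟩ := exists_cycle_of_list Kl h1 h2 h3 h4
    have := hlongest b D hD
    omega
  have hL0 : L ≠ [] := by
    intro h
    rw [h] at hLlen
    simp at hLlen
    omega
  -- P1 : endpoints nonadjacent
  have P1 : ¬ G.Adj u₂ u₁ := by
    intro hadj
    have := hnocyc L hLch hLnd ?_ (by omega)
    · omega
    · intro xh hxh yl hyl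
      rw [hheadL, Option.mem_def, Option.some.injEq] at hxh
      rw [hlastL, Option.mem_def, Option.some.injEq] at hyl
      subst hxh; subst hyl
      exact hadj
  have P1' : ¬ G.Adj u₁ u₂ := fun h => P1 h.symm
  have hu12 : u₁ ≠ u₂ := by
    intro h
    rw [← hg0, ← hgl] at h
    have := ginj 0 (p-1) (by omega) (by omega) h
    omega
  -- a vertex off the longest path
  have hn1 : 1 ≤ n := by
    rw [hn]
    exact Fintype.card_pos_iff.mpr hnonempty
  have hpn : p + 1 ≤ n := by omega
  have hz : ∃ z, z ∉ L := by
    by_contra h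
    push_neg at h
    have h1 : (Finset.univ : Finset V) ⊆ L.toFinset := fun y _ => List.mem_toFinset.mpr (h y)
    have h2 := Finset.card_le_card h1
    rw [Finset.card_univ, List.toFinset_card_of_nodup hLnd, ← hn] at h2
    omega
  obtain ⟨z, hzL⟩ := hz
  have hzu₁ : z ≠ u₁ := fun h => hzL (h ▸ (hg0 ▸ hgmem 0 (by omega)))
  have hzu₂ : z ≠ u₂ := fun h => hzL (h ▸ (hgl ▸ hgmem (p-1) (by omega)))
  -- all neighbors of endpoints lie on L
  have hrevch : L.reverse.Chain' G.Adj := by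
    unfold List.Chain'
    rw [List.isChain_reverse]
    have hflip : (flip G.Adj) = G.Adj := by
      funext x y
      exact propext ⟨fun h => h.symm, fun h => h.symm⟩
    rw [show (fun a b => G.Adj b a) = G.Adj from hflip]
    exact hLch
  have hnbr1 : ∀ y, G.Adj u₁ y → y ∈ L := by
    intro y hy
    by_contra hyL
    have h1 : (y :: L).Chain' G.Adj := by
      unfold List.Chain'
      rw [List.isChain_cons]
      refine ⟨fun b hb => ?_, hLch⟩
      rw [hheadL, Option.mem_def, Option.some.injEq] at hb
      subst hb
      exact hy.symm
    have h2 : (y :: L).Nodup := List.nodup_cons.mpr ⟨hyL, hLnd⟩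
    have := hmax (y :: L) h1 h2 (List.cons_ne_nil _ _)
    rw [List.length_cons, hLlen] at this
    omega
  have hnbr2 : ∀ y, G.Adj u₂ y → y ∈ L := by
    intro y hy
    by_contra hyL
    have h1 : (y :: L.reverse).Chain' G.Adj := by
      unfold List.Chain'
      rw [List.isChain_cons]
      refine ⟨fun b hb => ?_, hrevch⟩
      rw [List.head?_reverse, hlastL, Option.mem_def, Option.some.injEq] at hb
      subst hb
      exact hy.symm
    have h2 : (y :: L.reverse).Nodup :=
      List.nodup_cons.mpr ⟨fun hm => hyL (List.mem_reverse.mp hm), List.nodup_reverse.mpr hLnd⟩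
    have := hmax (y :: L.reverse) h1 h2 (List.cons_ne_nil _ _)
    rw [List.length_cons, List.length_reverse, hLlen] at this
    omega
  have hzadj1 : ¬ G.Adj z u₁ := fun h => hzL (hnbr1 z h.symm)
  have hzadj2 : ¬ G.Adj z u₂ := fun h => hzL (hnbr2 z h.symm)
  -- chain facts about take and drop
  have htd : ∀ m : ℕ, L.take m ++ L.drop m = L := fun m => List.take_append_drop m L
  have hchtake : ∀ m : ℕ, (L.take m).Chain' G.Adj := by
    intro m
    have h1 : (L.take m ++ L.drop m).Chain' G.Adj := by rw [htd m]; exact hLch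
    exact (List.isChain_append.mp h1).1
  have hchdrop : ∀ m : ℕ, (L.drop m).Chain' G.Adj := by
    intro m
    have h1 : (L.take m ++ L.drop m).Chain' G.Adj := by rw [htd m]; exact hLch
    exact (List.isChain_append.mp h1).2.1
  have htake_ne : ∀ m, 1 ≤ m → L.take m ≠ [] := by
    intro m hm h
    have := congrArg List.length h
    rw [List.length_take, List.length_nil] at this
    omega
  have hdrop_ne : ∀ m, m < p → L.drop m ≠ [] := by
    intro m hm h
    have := congrArg List.length h
    rw [List.length_drop, List.length_nil] at this
    omega
  have htake_head : ∀ m, 1 ≤ m → (L.take m).head? = some u₁ := by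
    intro m hm
    rw [List.head?_eq_getElem?, List.getElem?_take_of_lt (by omega : 0 < m),
      ← List.head?_eq_getElem?, hheadL]
  have htake_last : ∀ m, 1 ≤ m → m ≤ p → (L.take m).getLast? = some (g (m-1)) := by
    intro m hm hmp
    rw [getLast?_take' hm (by omega), hgsome (m-1) (by omega)]
  have hdrop_head : ∀ m, m < p → (L.drop m).head? = some (g m) := by
    intro m hm
    rw [head?_drop', hgsome m hm]
  have hdrop_last : ∀ m, m < p → (L.drop m).getLast? = some u₂ := by
    intro m hm
    rw [getLast?_drop' (by omega : m < L.length), hlastL]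
  -- rotation-extension exclusions
  have E1 : ∀ i, i + 1 < p → G.Adj u₁ (g (i+1)) → ¬ G.Adj z (g i) := by
    intro i hi h1 h2
    set Q := z :: ((L.take (i+1)).reverse ++ L.drop (i+1)) with hQ
    have hrevne : (L.take (i+1)).reverse ≠ [] := by
      intro h
      exact htake_ne (i+1) (by omega) (List.reverse_eq_nil_iff.mp h)
    have hch : Q.Chain' G.Adj := by
      rw [hQ]
      unfold List.Chain'
      rw [List.isChain_cons]
      constructor
      · intro b hb
        rw [List.head?_append_of_ne_nil _ hrevne, List.head?_reverse,
          htake_last (i+1) (by omega) (by omega), Option.mem_def, Option.some.injEq] at hb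
        subst hb
        simpa using h2
      · rw [List.isChain_append]
        refine ⟨?_, hchdrop (i+1), ?_⟩
        · rw [List.isChain_reverse]
          have hflip : (flip G.Adj) = G.Adj := by
            funext x y
            exact propext ⟨fun h => h.symm, fun h => h.symm⟩
          rw [show (fun a b => G.Adj b a) = G.Adj from hflip]
          exact hchtake (i+1)
        · intro xl hxl y hy
          rw [List.getLast?_reverse, htake_head (i+1) (by omega),
            Option.mem_def, Option.some.injEq] at hxl
          rw [hdrop_head (i+1) hi, Option.mem_def, Option.some.injEq] at hy
          subst hxl; subst hy
          exact h1
    have hnd : Q.Nodup := by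
      rw [hQ, List.nodup_cons]
      refine ⟨?_, nodup_reverse_append (by rw [htd (i+1)]; exact hLnd)⟩
      intro hzmem
      rcases List.mem_append.mp hzmem with hm | hm
      · exact hzL (List.take_subset _ _ (List.mem_reverse.mp hm))
      · exact hzL (List.drop_subset _ _ hm)
    have hle := hmax Q hch hnd (by rw [hQ]; exact List.cons_ne_nil _ _)
    rw [hQ, List.length_cons, List.length_append, List.length_reverse,
      List.length_take, List.length_drop, hLlen] at hle
    omega
  have E2 : ∀ i, 1 ≤ i → i < p → G.Adj u₂ (g (i-1)) → ¬ G.Adj z (g i) := by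
    intro i hi1 hip h1 h2
    set Q := z :: (L.drop i ++ (L.take i).reverse) with hQ
    have hch : Q.Chain' G.Adj := by
      rw [hQ]
      unfold List.Chain'
      rw [List.isChain_cons]
      constructor
      · intro b hb
        rw [List.head?_append_of_ne_nil _ (hdrop_ne i hip), hdrop_head i hip,
          Option.mem_def, Option.some.injEq] at hb
        subst hb
        exact h2
      · rw [List.isChain_append]
        refine ⟨hchdrop i, ?_, ?_⟩
        · rw [List.isChain_reverse]
          have hflip : (flip G.Adj) = G.Adj := by
            funext x y
            exact propext ⟨fun h => h.symm, fun h => h.symm⟩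
          rw [show (fun a b => G.Adj b a) = G.Adj from hflip]
          exact hchtake i
        · intro xl hxl y hy
          rw [hdrop_last i hip, Option.mem_def, Option.some.injEq] at hxl
          rw [List.head?_reverse, htake_last i hi1 (by omega),
            Option.mem_def, Option.some.injEq] at hy
          subst hxl; subst hy
          exact h1
    have hnd : Q.Nodup := by
      rw [hQ, List.nodup_cons]
      constructor
      · intro hzmem
        rcases List.mem_append.mp hzmem with hm | hm
        · exact hzL (List.drop_subset _ _ hm)
        · exact hzL (List.take_subset _ _ (List.mem_reverse.mp hm))
      · apply nodup_append_reverse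
        rw [List.nodup_append_comm, htd i]
        exact hLnd
    have hle := hmax Q hch hnd (by rw [hQ]; exact List.cons_ne_nil _ _)
    rw [hQ, List.length_cons, List.length_append, List.length_reverse,
      List.length_take, List.length_drop, hLlen] at hle
    omega
  -- index sets
  set S := (Finset.range (p-1)).filter (fun i => G.Adj u₁ (g (i+1))) with hS
  set T := (Finset.range p).filter (fun i => 2 ≤ i ∧ G.Adj u₂ (g (i-1))) with hT
  set Zs := (Finset.range p).filter (fun i => G.Adj z (g i)) with hZs
  have hcardS : S.card = G.degree u₁ := by
    apply Finset.card_bij (fun i _ => g (i+1))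
    · intro i hi
      rw [hS, Finset.mem_filter] at hi
      exact (SimpleGraph.mem_neighborFinset _ _ _).mpr hi.2
    · intro i hi j hj heq
      rw [hS, Finset.mem_filter, Finset.mem_range] at hi hj
      have := ginj (i+1) (j+1) (by omega) (by omega) heq
      omega
    · intro y hy
      have hy' : G.Adj u₁ y := (SimpleGraph.mem_neighborFinset _ _ _).mp hy
      obtain ⟨j, hj, rfl⟩ := hidx y (hnbr1 y hy')
      have hj0 : j ≠ 0 := by
        intro h
        subst h
        rw [hg0] at hy'
        exact G.loopless.irrefl u₁ hy'
      refine ⟨j - 1, ?_, ?_⟩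
      · rw [hS, Finset.mem_filter, Finset.mem_range]
        have hj1 : j - 1 + 1 = j := by omega
        rw [hj1]
        exact ⟨by omega, hy'⟩
      · have hj1 : j - 1 + 1 = j := by omega
        rw [hj1]
  have hcardT : T.card = G.degree u₂ := by
    apply Finset.card_bij (fun i _ => g (i-1))
    · intro i hi
      rw [hT, Finset.mem_filter] at hi
      exact (SimpleGraph.mem_neighborFinset _ _ _).mpr hi.2.2
    · intro i hi j hj heq
      rw [hT, Finset.mem_filter, Finset.mem_range] at hi hj
      have := ginj (i-1) (j-1) (by omega) (by omega) heq
      omega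
    · intro y hy
      have hy' : G.Adj u₂ y := (SimpleGraph.mem_neighborFinset _ _ _).mp hy
      obtain ⟨j, hj, rfl⟩ := hidx y (hnbr2 y hy')
      have hjp : j ≠ p - 1 := by
        intro h
        subst h
        rw [hgl] at hy'
        exact G.loopless.irrefl u₂ hy'
      have hj0 : j ≠ 0 := by
        intro h
        subst h
        rw [hg0] at hy'
        exact P1 hy'
      refine ⟨j + 1, ?_, ?_⟩
      · rw [hT, Finset.mem_filter, Finset.mem_range]
        have hj1 : j + 1 - 1 = j := by omega
        rw [hj1]
        exact ⟨by omega, by omega, hy'⟩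
      · have hj1 : j + 1 - 1 = j := by omega
        rw [hj1]
  have hcardZ : G.degree z ≤ Zs.card + (n - p - 1) := by
    set Nz := G.neighborFinset z with hNz
    set F := L.toFinset with hF
    have hFcard : F.card = p := by rw [hF, List.toFinset_card_of_nodup hLnd]; omega
    have hsplit := Finset.card_inter_add_card_sdiff Nz F
    have h1 : Zs.card = (Nz ∩ F).card := by
      apply Finset.card_bij (fun i _ => g i)
      · intro i hi
        rw [hZs, Finset.mem_filter, Finset.mem_range] at hi
        rw [Finset.mem_inter, hNz, SimpleGraph.mem_neighborFinset, hF, List.mem_toFinset]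
        exact ⟨hi.2, hgmem i hi.1⟩
      · intro i hi j hj heq
        rw [hZs, Finset.mem_filter, Finset.mem_range] at hi hj
        exact ginj i j hi.1 hj.1 heq
      · intro y hy
        rw [Finset.mem_inter, hNz, SimpleGraph.mem_neighborFinset, hF, List.mem_toFinset] at hy
        obtain ⟨j, hj, rfl⟩ := hidx y hy.2
        exact ⟨j, by rw [hZs, Finset.mem_filter, Finset.mem_range]; exact ⟨hj, hy.1⟩, rfl⟩
    have h2 : (Nz \ F).card ≤ n - p - 1 := by
      have hsub : Nz \ F ⊆ Finset.univ \ insert z F := by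
        intro y hy
        rw [Finset.mem_sdiff] at hy ⊢
        refine ⟨Finset.mem_univ y, ?_⟩
        rw [Finset.mem_insert]
        rintro (rfl | hmem)
        · exact G.loopless.irrefl y ((SimpleGraph.mem_neighborFinset _ _ _).mp hy.1)
        · exact hy.2 hmem
      have h3 := Finset.card_le_card hsub
      rw [Finset.card_sdiff_of_subset (Finset.subset_univ _), Finset.card_univ,
        Finset.card_insert_of_notMem (fun h => hzL (List.mem_toFinset.mp h)), hFcard,
        ← hn] at h3
      omega
    have hdeg : G.degree z = Nz.card := rfl
    omega
  -- conclusion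
  by_cases hST : (S ∩ T).Nonempty
  · obtain ⟨i, hi⟩ := hST
    rw [Finset.mem_inter, hS, hT, Finset.mem_filter, Finset.mem_filter,
      Finset.mem_range, Finset.mem_range] at hi
    obtain ⟨⟨hip, hadj1⟩, ⟨-, hi2, hadj2⟩⟩ := hi
    set Kl := L.take i ++ (L.drop (i+1)).reverse with hKl
    have hdne : (L.drop (i+1)).reverse ≠ [] := by
      intro h
      exact hdrop_ne (i+1) (by omega) (List.reverse_eq_nil_iff.mp h)
    have hch : Kl.Chain' G.Adj := by
      rw [hKl]
      unfold List.Chain'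
      rw [List.isChain_append]
      refine ⟨hchtake i, ?_, ?_⟩
      · rw [List.isChain_reverse]
        have hflip : (flip G.Adj) = G.Adj := by
          funext x y
          exact propext ⟨fun h => h.symm, fun h => h.symm⟩
        rw [show (fun a b => G.Adj b a) = G.Adj from hflip]
        exact hchdrop (i+1)
      · intro xl hxl y hy
        rw [htake_last i (by omega) (by omega), Option.mem_def, Option.some.injEq] at hxl
        rw [List.head?_reverse, hdrop_last (i+1) (by omega),
          Option.mem_def, Option.some.injEq] at hy
        subst hxl; subst hy
        exact hadj2.symm
    have hnd : Kl.Nodup := by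
      rw [hKl]
      apply nodup_append_reverse
      have hsub : List.Sublist (L.take i ++ L.drop (i+1)) L := by
        have h1 : List.Sublist (L.drop (i+1)) (g i :: L.drop (i+1)) := List.sublist_cons_self _ _
        have h2 : L.drop i = g i :: L.drop (i+1) := by
          rw [hgget i (by omega)]
          exact List.drop_eq_getElem_cons (by omega)
        calc List.Sublist (L.take i ++ L.drop (i+1)) (L.take i ++ L.drop i) := by
              rw [h2]
              exact List.Sublist.append_left h1 _
          _ = L := htd i
      exact hLnd.sublist hsub
    have hcl : ∀ xh ∈ Kl.head?, ∀ yl ∈ Kl.getLast?, G.Adj yl xh := by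
      intro xh hxh yl hyl
      rw [hKl, List.head?_append_of_ne_nil _ (htake_ne i (by omega)),
        htake_head i (by omega), Option.mem_def, Option.some.injEq] at hxh
      rw [hKl, List.getLast?_append_of_ne_nil _ hdne, List.getLast?_reverse,
        hdrop_head (i+1) (by omega), Option.mem_def, Option.some.injEq] at hyl
      subst hxh; subst hyl
      exact hadj1.symm
    have hlen : Kl.length = p - 1 := by
      rw [hKl, List.length_append, List.length_reverse, List.length_take,
        List.length_drop, hLlen]
      omega
    have := hnocyc Kl hch hnd hcl (by omega)
    omega
  · have hSTempty : S ∩ T = ∅ := Finset.not_nonempty_iff_eq_empty.mp hST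
    have hdisjST : Disjoint S T := Finset.disjoint_iff_inter_eq_empty.mpr hSTempty
    have hunion : (S ∪ T).card = S.card + T.card := Finset.card_union_of_disjoint hdisjST
    have hsubU : S ∪ T ⊆ Finset.range p := by
      apply Finset.union_subset
      · intro i hi
        rw [hS, Finset.mem_filter, Finset.mem_range] at hi
        rw [Finset.mem_range]
        omega
      · exact (Finset.filter_subset _ _)
    have hZsub : Zs ⊆ Finset.range p \ (S ∪ T) := by
      intro i hi
      have hiZ := hi
      rw [hZs, Finset.mem_filter, Finset.mem_range] at hiZ
      rw [Finset.mem_sdiff, Finset.mem_range]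
      refine ⟨hiZ.1, fun hmem => ?_⟩
      rcases Finset.mem_union.mp hmem with hm | hm
      · rw [hS, Finset.mem_filter, Finset.mem_range] at hm
        exact E1 i (by omega) hm.2 hiZ.2
      · rw [hT, Finset.mem_filter, Finset.mem_range] at hm
        exact E2 i (by omega) (by omega) hm.2.2 hiZ.2
    have hZcard : Zs.card + (S.card + T.card) ≤ p := by
      have h1 := Finset.card_le_card hZsub
      rw [Finset.card_sdiff_of_subset hsubU, Finset.card_range, hunion] at h1
      have h2 := Finset.card_le_card hsubU
      rw [Finset.card_range, hunion] at h2
      omega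
    have hσ := hσ₃ u₁ u₂ z hu12 (Ne.symm hzu₁) (Ne.symm hzu₂) P1'
      (fun h => hzadj1 h.symm) (fun h => hzadj2 h.symm)
    omega
end

section
/- Let G be a graph and let C = c_1 c_2 … c_m c_1 be a longest cycle of G (indices taken modulo m). Suppose every path in G has at most m+1 vertices. Then for every index i, it is not the case that both c_i and c_{i+1} have a neighbor outside V(C). (That is, two consecutive vertices of C cannot both have neighbors not on C.) -/
open SimpleGraph

private def cyc {V : Type*} (G : SimpleGraph V) (m : ℕ) (c : ZMod m → V)
    (hcadj : ∀ i : ZMod m, G.Adj (c i) (c (i + 1))) (j : ZMod m) :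
    (n : ℕ) → G.Walk (c j) (c (j + n))
  | 0 => Walk.nil.copy rfl (by simp)
  | n+1 => (Walk.cons (hcadj j) (cyc G m c hcadj (j+1) n)).copy rfl (by push_cast; ring_nf)

private lemma cyc_length {V : Type*} (G : SimpleGraph V) (m : ℕ) (c : ZMod m → V)
    (hcadj : ∀ i : ZMod m, G.Adj (c i) (c (i + 1))) (j : ZMod m) (n : ℕ) :
    (cyc G m c hcadj j n).length = n := by
  induction n generalizing j with
  | zero => simp [cyc]
  | succ n ih => simp [cyc, ih]

private lemma cyc_support {V : Type*} (G : SimpleGraph V) (m : ℕ) (c : ZMod m → V)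
    (hcadj : ∀ i : ZMod m, G.Adj (c i) (c (i + 1))) (j : ZMod m) (n : ℕ) :
    (cyc G m c hcadj j n).support = (List.range (n+1)).map (fun k : ℕ => c (j + (k : ZMod m))) := by
  induction n generalizing j with
  | zero => simp [cyc, List.range_succ]
  | succ n ih =>
    rw [List.range_succ_eq_map]
    simp only [cyc, Walk.support_copy, Walk.support_cons, ih, List.map_cons, List.map_map]
    congr 1
    · simp
    · apply List.map_congr_left
      intro k _
      simp only [Function.comp_apply]
      congr 1
      push_cast
      ring

/-- Let `C = c₁ c₂ … c_m c₁` be a longest cycle of a graph `G` (indices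
modulo `m`), and suppose every path in `G` has at most `m + 1` vertices. Then no two
consecutive vertices of `C` can both have neighbors outside `V(C)`. -/
theorem stmt_6 {V : Type*} (G : SimpleGraph V) (m : ℕ) (hm : 3 ≤ m)
    (c : ZMod m → V) (hcinj : Function.Injective c)
    (hcadj : ∀ i : ZMod m, G.Adj (c i) (c (i + 1)))
    (hlongest : ∀ (a : V) (w : G.Walk a a), w.IsCycle → w.length ≤ m)
    (hpath : ∀ (a b : V) (w : G.Walk a b), w.IsPath → w.length + 1 ≤ m + 1) :
    ∀ i : ZMod m,
      ¬ ((∃ x, x ∉ Set.range c ∧ G.Adj (c i) x) ∧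
         (∃ y, y ∉ Set.range c ∧ G.Adj (c (i + 1)) y)) := by
  haveI : NeZero m := ⟨by omega⟩
  haveI : Fact (1 < m) := ⟨by omega⟩
  rintro i ⟨⟨x, hxr, hx⟩, ⟨y, hyr, hy⟩⟩
  -- the long walk around the cycle from c (i+1) to c i
  have hend : c ((i + 1) + ((m - 1 : ℕ) : ZMod m)) = c i := by
    congr 1
    have : ((m - 1 : ℕ) : ZMod m) = -1 := by
      have h1 : (1 : ℕ) ≤ m := by omega
      push_cast [Nat.cast_sub h1]
      simp
    rw [this]; ring
  set L : List V := (List.range m).map (fun k : ℕ => c (i + 1 + (k : ZMod m))) with hL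
  have hLsub : ∀ v ∈ L, v ∈ Set.range c := by
    intro v hv
    simp only [hL, List.mem_map] at hv
    obtain ⟨k, _, rfl⟩ := hv
    exact Set.mem_range_self _
  have hLnodup : L.Nodup := by
    apply List.Nodup.map_on _ (List.nodup_range : (List.range m).Nodup)
    intro k1 hk1 k2 hk2 hEq
    have := hcinj hEq
    have h2 : ((k1 : ZMod m)) = (k2 : ZMod m) := by
      have := add_left_cancel this
      exact this
    have := congrArg ZMod.val h2
    rwa [ZMod.val_cast_of_lt (List.mem_range.mp hk1),
      ZMod.val_cast_of_lt (List.mem_range.mp hk2)] at this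
  let p : G.Walk (c (i + 1)) (c i) :=
    (cyc G m c hcadj (i + 1) (m - 1)).copy rfl hend
  have hpsupp : p.support = L := by
    simp only [p, Walk.support_copy, cyc_support, hL]
    congr 2
    omega
  have hplen : p.length = m - 1 := by
    simp [p, cyc_length]
  let q : G.Walk (c (i + 1)) x := p.concat hx
  have hqsupp : q.support = L ++ [x] := by
    simp [q, Walk.support_concat, hpsupp, List.concat_eq_append]
  have hqpath : q.IsPath := by
    rw [Walk.isPath_def, hqsupp]
    rw [List.nodup_append]
    refine ⟨hLnodup, List.nodup_singleton x, ?_⟩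
    intro v hv w hv' hvw
    rw [List.mem_singleton] at hv'
    subst hv' hvw
    exact hxr (hLsub _ hv)
  have hqlen : q.length = m := by
    simp [q, Walk.length_concat, hplen]; omega
  by_cases hxy : x = y
  · -- build a longer cycle
    subst hxy
    let W : G.Walk x x := Walk.cons hy.symm q
    have hWc : W.IsCycle := by
      rw [Walk.cons_isCycle_iff]
      refine ⟨hqpath, ?_⟩
      intro hmem
      simp only [q, Walk.edges_concat, List.concat_eq_append, List.mem_append,
        List.mem_singleton] at hmem
      rcases hmem with hmem | hmem
      · have : x ∈ p.support := Walk.fst_mem_support_of_mem_edges p hmem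
        rw [hpsupp] at this
        exact hxr (hLsub x this)
      · rw [Sym2.eq_iff] at hmem
        rcases hmem with ⟨h1, h2⟩ | ⟨h1, h2⟩
        · exact hxr ⟨i, h1.symm⟩
        · have h3 : i + 1 = i := hcinj h2
          simp at h3
    have := hlongest x W hWc
    have hWlen : W.length = m + 1 := by
      simp [W, Walk.length_cons, hqlen]
    omega
  · -- build a longer path
    let W : G.Walk y x := Walk.cons hy.symm q
    have hWp : W.IsPath := by
      rw [Walk.cons_isPath_iff]
      refine ⟨hqpath, ?_⟩
      rw [hqsupp]
      intro hmem
      rcases List.mem_append.mp hmem with h | h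
      · exact hyr (hLsub y h)
      · exact hxy ((List.mem_singleton.mp h).symm)
    have := hpath y x W hWp
    have hWlen : W.length = m + 1 := by
      simp [W, Walk.length_cons, hqlen]
    omega
end

section
/- Let G be a graph and let C = c_1 c_2 … c_m c_1 be a longest cycle of G (indices taken modulo m). Suppose every path in G has at most m+1 vertices. If c_i and c_j are adjacent in G where c_i and c_j are not consecutive on C (i.e., |i-j| > 1 modulo m), then it is not the case that both c_{i+1} and c_{j+1} have a neighbor outside V(C). -/
open SimpleGraph

private def fwdWalk {V : Type*} {G : SimpleGraph V} {m : ℕ} {c : ZMod m → V}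
    (hcadj : ∀ i : ZMod m, G.Adj (c i) (c (i + 1))) (a : ZMod m) :
    (k : ℕ) → G.Walk (c a) (c (a + k))
  | 0 => Walk.nil.copy rfl (congrArg c (by push_cast; ring))
  | k + 1 => ((fwdWalk hcadj a k).concat (hcadj (a + k))).copy rfl
      (congrArg c (by push_cast; ring))

private lemma fwdWalk_length {V : Type*} {G : SimpleGraph V} {m : ℕ} {c : ZMod m → V}
    (hcadj : ∀ i : ZMod m, G.Adj (c i) (c (i + 1))) (a : ZMod m) (k : ℕ) :
    (fwdWalk hcadj a k).length = k := by
  induction k with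
  | zero => simp [fwdWalk]
  | succ k ih => simp [fwdWalk, Walk.length_concat, ih]

private lemma fwdWalk_support {V : Type*} {G : SimpleGraph V} {m : ℕ} {c : ZMod m → V}
    (hcadj : ∀ i : ZMod m, G.Adj (c i) (c (i + 1))) (a : ZMod m) (k : ℕ) :
    (fwdWalk hcadj a k).support = (List.range (k+1)).map (fun u : ℕ => c (a + (u : ZMod m))) := by
  induction k with
  | zero => simp [fwdWalk, List.range_succ]
  | succ k ih =>
    rw [show (fwdWalk hcadj a (k+1)) = ((fwdWalk hcadj a k).concat (hcadj (a + k))).copy rfl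
      (congrArg c (by push_cast; ring)) from rfl]
    rw [Walk.support_copy, Walk.support_concat, ih,
      show (k+1+1) = (k+1)+1 from rfl, List.range_succ (n := k+1), List.map_append,
      List.range_succ (n := k)]
    simp [add_assoc]

example {m : ℕ} [NeZero m] (a : ZMod m) : ((a.val : ℕ) : ZMod m) = a := ZMod.natCast_rightInverse a
example {m : ℕ} [NeZero m] (a : ZMod m) : a.val < m := ZMod.val_lt a
example {m : ℕ} [NeZero m] (a : ZMod m) : a.val = 0 ↔ a = 0 := ZMod.val_eq_zero a

/-- Let `C = c₁ c₂ … c_m c₁` be a longest cycle of a graph `G` (indices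
modulo `m`), and suppose every path in `G` has at most `m + 1` vertices. If `c_i` and
`c_j` are adjacent in `G` and not consecutive on `C`, then `c_{i+1}` and `c_{j+1}`
cannot both have neighbors outside `V(C)`. -/
theorem stmt_7 {V : Type*} (G : SimpleGraph V) (m : ℕ) (hm : 3 ≤ m)
    (c : ZMod m → V) (hcinj : Function.Injective c)
    (hcadj : ∀ i : ZMod m, G.Adj (c i) (c (i + 1)))
    (hlongest : ∀ (a : V) (w : G.Walk a a), w.IsCycle → w.length ≤ m)
    (hpath : ∀ (a b : V) (w : G.Walk a b), w.IsPath → w.length + 1 ≤ m + 1)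
    (i j : ZMod m) (hchord : G.Adj (c i) (c j)) (hij1 : j ≠ i + 1) (hij2 : i ≠ j + 1) :
    ¬ ((∃ x, x ∉ Set.range c ∧ G.Adj (c (i + 1)) x) ∧
       (∃ y, y ∉ Set.range c ∧ G.Adj (c (j + 1)) y)) := by
  rintro ⟨⟨x, hx, hxadj⟩, y, hy, hyadj⟩
  have hNZ : NeZero m := ⟨by omega⟩
  have hij : i ≠ j := fun h => hchord.ne (congrArg c h)
  set t := (j - i - 1).val with ht
  set s := (i - j - 1).val with hs
  have htm : (t : ZMod m) = j - i - 1 := ZMod.natCast_rightInverse _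
  have hsm : (s : ZMod m) = i - j - 1 := ZMod.natCast_rightInverse _
  have htlt : t < m := ZMod.val_lt _
  have hslt : s < m := ZMod.val_lt _
  have htpos : t ≠ 0 := by
    rw [ht, Ne, ZMod.val_eq_zero, sub_sub, sub_eq_zero]
    exact hij1
  have hspos : s ≠ 0 := by
    rw [hs, Ne, ZMod.val_eq_zero, sub_sub, sub_eq_zero]
    exact hij2
  have hm1 : ((m - 1 : ℕ) : ZMod m) = -1 := by
    rw [Nat.cast_sub (by omega), Nat.cast_one, ZMod.natCast_self, zero_sub]
  have htne : t ≠ m - 1 := by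
    intro h
    apply hij
    have h2 : (-1 : ZMod m) = j - i - 1 := by rw [← hm1, ← h, htm]
    linear_combination h2
  have hsum : t + s = m - 2 := by
    have hv : ((j - i - 1) + (i - j - 1)).val = (t + s) % m := ZMod.val_add _ _
    have he : (j - i - 1) + (i - j - 1) = ((m - 2 : ℕ) : ZMod m) := by
      rw [Nat.cast_sub (by omega : (2:ℕ) ≤ m)]
      push_cast [ZMod.natCast_self]
      ring
    have hmod : (t + s) % m = m - 2 := by
      rw [← hv, he, ZMod.val_cast_of_lt (by omega)]
    rcases Nat.lt_or_ge (t + s) m with h | h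
    · rwa [Nat.mod_eq_of_lt h] at hmod
    · rw [Nat.mod_eq_sub_mod h, Nat.mod_eq_of_lt (by omega)] at hmod
      omega
  have hj' : i + 1 + (t : ZMod m) = j := by rw [htm]; ring
  have hi' : j + 1 + (s : ZMod m) = i := by rw [hsm]; ring
  have castinj : ∀ u v : ℕ, u < m → v < m → ((u : ZMod m) = (v : ZMod m)) → u = v := by
    intro u v hu hv h
    have h2 := congrArg ZMod.val h
    rwa [ZMod.val_cast_of_lt hu, ZMod.val_cast_of_lt hv] at h2
  set L1 : List V := (List.range (t + 1)).map (fun u : ℕ => c (i + 1 + (u : ZMod m))) with hL1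
  set L2 : List V := (List.range (s + 1)).map (fun u : ℕ => c (j + 1 + (u : ZMod m))) with hL2
  set W1 : G.Walk (c (i + 1)) (c j) := (fwdWalk hcadj (i + 1) t).copy rfl (congrArg c hj') with hW1
  set W3 : G.Walk (c i) (c (j + 1)) :=
    ((fwdWalk hcadj (j + 1) s).copy rfl (congrArg c hi')).reverse with hW3
  set mid : G.Walk (c (i + 1)) (c (j + 1)) := W1.append (Walk.cons hchord.symm W3) with hmid
  have hmidsup : mid.support = L1 ++ L2.reverse := by
    rw [hmid, Walk.support_append, Walk.support_cons, List.tail_cons, hW1, hW3,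
      Walk.support_reverse, Walk.support_copy, Walk.support_copy,
      fwdWalk_support, fwdWalk_support, hL1, hL2]
  have hL1nd : L1.Nodup := by
    rw [hL1]
    refine List.Nodup.map_on ?_ List.nodup_range
    intro u hu v hv h
    rw [List.mem_range] at hu hv
    have h2 := hcinj h
    have h3 : (u : ZMod m) = (v : ZMod m) := by linear_combination h2
    exact castinj u v (by omega) (by omega) h3
  have hL2nd : L2.Nodup := by
    rw [hL2]
    refine List.Nodup.map_on ?_ List.nodup_range
    intro u hu v hv h
    rw [List.mem_range] at hu hv
    have h2 := hcinj h
    have h3 : (u : ZMod m) = (v : ZMod m) := by linear_combination h2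
    exact castinj u v (by omega) (by omega) h3
  have hdisj : L1.Disjoint L2.reverse := by
    intro v hv1 hv2
    rw [List.mem_reverse] at hv2
    rw [hL1, List.mem_map] at hv1
    rw [hL2, List.mem_map] at hv2
    obtain ⟨u, hu, rfl⟩ := hv1
    obtain ⟨u', hu', he⟩ := hv2
    rw [List.mem_range] at hu hu'
    have h2 := hcinj he
    have h3 : ((t + 1 + u' : ℕ) : ZMod m) = (u : ZMod m) := by
      push_cast
      linear_combination h2 + hj'
    have h4 := castinj _ _ (by omega) (by omega) h3
    omega
  have hmidnd : mid.support.Nodup := by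
    rw [hmidsup, List.nodup_append]
    exact ⟨hL1nd, List.nodup_reverse.mpr hL2nd, fun a ha b hb hab => by subst hab; exact hdisj ha hb⟩
  have hmem : ∀ v ∈ mid.support, v ∈ Set.range c := by
    rw [hmidsup]
    intro v hv
    rcases List.mem_append.mp hv with h | h
    · rw [hL1, List.mem_map] at h
      obtain ⟨u, _, rfl⟩ := h
      exact Set.mem_range_self _
    · rw [List.mem_reverse, hL2, List.mem_map] at h
      obtain ⟨u, _, rfl⟩ := h
      exact Set.mem_range_self _
  have hmidlen : mid.length = t + 1 + s := by
    rw [hmid, Walk.length_append, Walk.length_cons, hW1, hW3, Walk.length_copy,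
      Walk.length_reverse, Walk.length_copy, fwdWalk_length, fwdWalk_length]
    omega
  by_cases hxy : x = y
  · subst hxy
    have hP2path : (mid.concat hyadj).IsPath := by
      rw [Walk.isPath_def, Walk.support_concat, List.nodup_append]
      refine ⟨hmidnd, List.nodup_singleton _, ?_⟩
      intro a ha b hb hab
      rw [List.mem_singleton] at hb
      subst hb
      subst hab
      exact hx (hmem _ ha)
    have hedge : s(x, c (i + 1)) ∉ (mid.concat hyadj).edges := by
      rw [Walk.edges_concat, List.concat_eq_append]
      intro h
      rcases List.mem_append.mp h with h | h
      · exact hx (hmem _ (Walk.fst_mem_support_of_mem_edges mid h))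
      · rw [List.mem_singleton, Sym2.eq_iff] at h
        rcases h with ⟨h1, _⟩ | ⟨_, h2⟩
        · exact hx ⟨j + 1, h1.symm⟩
        · exact hij (by have := hcinj h2; linear_combination this)
    have hcyc : (Walk.cons hxadj.symm (mid.concat hyadj)).IsCycle :=
      (Walk.cons_isCycle_iff _ _).mpr ⟨hP2path, hedge⟩
    have hle := hlongest x _ hcyc
    rw [Walk.length_cons, Walk.length_concat, hmidlen] at hle
    omega
  · have hPpath : (Walk.cons hxadj.symm (mid.concat hyadj)).IsPath := by
      rw [Walk.isPath_def, Walk.support_cons, Walk.support_concat,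
        List.nodup_cons]
      refine ⟨?_, ?_⟩
      · intro hxin
        rcases List.mem_append.mp hxin with h | h
        · exact hx (hmem _ h)
        · rw [List.mem_singleton] at h
          exact hxy h
      · rw [List.nodup_append]
        refine ⟨hmidnd, List.nodup_singleton _, ?_⟩
        intro a ha b hb hab
        rw [List.mem_singleton] at hb
        subst hb
        subst hab
        exact hy (hmem _ ha)
    have hle := hpath x y _ hPpath
    rw [Walk.length_cons, Walk.length_concat, hmidlen] at hle
    omega
end

section
/- Let t ≥ 5 be an integer and let G be a connected graph on exactly n = 2t-4 vertices with σ₂(G) ≥ ((t-3)/(t-2))·n. If G has no Hamiltonian path, then G is the join of a graph on t-3 vertices with t-1 isolated vertices; that is, there exists a set S of t-1 pairwise nonadjacent vertices of G such that every vertex of S is adjacent to every vertex of V(G) \ S. -/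
open SimpleGraph

open List
set_option linter.unusedSectionVars false
set_option maxHeartbeats 1000000

section
variable {V : Type*} [Fintype V] [DecidableEq V] {G : SimpleGraph V} [DecidableRel G.Adj]

/-- `v` enumerates a path of `k` distinct vertices of `G`. -/
def Good (G : SimpleGraph V) (k : ℕ) (v : ℕ → V) : Prop :=
  (∀ i < k, ∀ j < k, v i = v j → i = j) ∧ ∀ i, i + 1 < k → G.Adj (v i) (v (i+1))

lemma exists_walk_of_chain_s13 : ∀ (l : List V) (h : l ≠ []), l.Chain' G.Adj →
    ∃ (b : V) (p : G.Walk (l.head h) b), p.support = l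
  | [], h, _ => absurd rfl h
  | [a], _, _ => ⟨a, Walk.nil, rfl⟩
  | a :: b :: t, _, hc => by
    obtain ⟨hab, hc'⟩ := List.isChain_cons_cons.mp hc
    obtain ⟨c, p, hp⟩ := exists_walk_of_chain_s13 (b :: t) (by simp) hc'
    exact ⟨c, Walk.cons hab p, (Walk.support_cons _ _).trans (congrArg _ hp)⟩

lemma ham_of_good (v : ℕ → V) (hk : Good G (Fintype.card V) v) :
    ∃ (a b : V) (p : G.Walk a b), p.IsHamiltonian := by
  set n := Fintype.card V with hn
  have hn0 : 0 < n := by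
    rw [hn]; exact Fintype.card_pos_iff.mpr ⟨v 0⟩
  set l : List V := List.ofFn (fun i : Fin n => v i) with hl
  have hlen : l.length = n := by simp [hl]
  have hne : l ≠ [] := by
    intro h; rw [h] at hlen; simp at hlen; omega
  have hchain : l.Chain' G.Adj := by
    rw [hl]; show List.IsChain _ _; rw [List.isChain_ofFn]
    intro i hi
    exact hk.2 i hi
  have hnd : l.Nodup := by
    rw [hl, List.nodup_ofFn]
    intro ⟨i, hi⟩ ⟨j, hj⟩ hij
    exact Fin.ext (hk.1 i hi j hj hij)
  obtain ⟨b, p, hp⟩ := exists_walk_of_chain_s13 l hne hchain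
  refine ⟨_, b, p, fun x => ?_⟩
  have hx : x ∈ l := by
    have : l.toFinset = Finset.univ := by
      apply Finset.eq_univ_of_card
      rw [List.toFinset_card_of_nodup hnd, hlen]
    simp [← List.mem_toFinset, this]
  rw [hp]
  exact List.count_eq_one_of_mem hnd hx

/-- paths are bounded by the number of vertices -/
lemma good_le_card (k : ℕ) (v : ℕ → V) (h : Good G k v) : k ≤ Fintype.card V := by
  have : Function.Injective (fun i : Fin k => v i) := by
    intro ⟨i, hi⟩ ⟨j, hj⟩ hij
    exact Fin.ext (h.1 i hi j hj hij)
  simpa using Fintype.card_le_of_injective _ this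


/-- generic builder: prepend a fresh vertex `w` to a re-indexed path. -/
lemma good_fresh_cons {k : ℕ} {v : ℕ → V} (hv : Good G k v) (w : V)
    (hw : ∀ i < k, v i ≠ w) (e : ℕ → ℕ)
    (he : ∀ i, 1 ≤ i → i ≤ k → e i < k)
    (heinj : ∀ i j, 1 ≤ i → i ≤ k → 1 ≤ j → j ≤ k → e i = e j → i = j)
    (hadj0 : 1 ≤ k → G.Adj w (v (e 1)))
    (hadjs : ∀ i, 1 ≤ i → i + 1 ≤ k → G.Adj (v (e i)) (v (e (i+1)))) :
    Good G (k+1) (fun i => if i = 0 then w else v (e i)) := by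
  constructor
  · intro i hi j hj hij
    simp only at hij
    by_cases hi0 : i = 0 <;> by_cases hj0 : j = 0
    · omega
    · rw [if_pos hi0, if_neg hj0] at hij
      exact absurd hij.symm (hw (e j) (he j (by omega) (by omega)))
    · rw [if_neg hi0, if_pos hj0] at hij
      exact absurd hij (hw (e i) (he i (by omega) (by omega)))
    · rw [if_neg hi0, if_neg hj0] at hij
      exact heinj i j (by omega) (by omega) (by omega) (by omega)
        (hv.1 _ (he i (by omega) (by omega)) _ (he j (by omega) (by omega)) hij)
  · intro i hi
    simp only
    by_cases hi0 : i = 0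
    · subst hi0
      simpa using hadj0 (by omega)
    · rw [if_neg hi0, if_neg (by omega : i + 1 ≠ 0)]
      exact hadjs i (by omega) (by omega)

/-- reversal of a path. -/
lemma good_reverse {k : ℕ} {v : ℕ → V} (hv : Good G k v) :
    Good G k (fun i => v (k - 1 - i)) := by
  constructor
  · intro i hi j hj hij
    have := hv.1 _ (by omega) _ (by omega) hij
    omega
  · intro i hi
    simp only
    have h := hv.2 (k - 2 - i) (by omega)
    have e1 : k - 2 - i + 1 = k - 1 - i := by omega
    have e2 : k - 1 - (i+1) = k - 2 - i := by omega
    rw [e1] at h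
    rw [e2]
    exact h.symm

/-- attaching a fresh vertex to a "cycle" gives a longer path. -/
lemma good_succ_of_cycle {k : ℕ} (c : ℕ → V)
    (hinj : ∀ i < k, ∀ j < k, c i = c j → i = j)
    (hadj : ∀ i < k, G.Adj (c i) (c ((i+1) % k)))
    (w : V) (hw : ∀ i < k, c i ≠ w) (m : ℕ) (hm : m < k) (hwm : G.Adj w (c m)) :
    Good G (k+1) (fun i => if i = 0 then w else c ((m + i - 1) % k)) := by
  have hk0 : 0 < k := by omega
  have hgood : Good G k c := by
    refine ⟨hinj, fun i hi => ?_⟩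
    have := hadj i (by omega)
    rwa [Nat.mod_eq_of_lt (by omega)] at this
  refine good_fresh_cons hgood w hw (fun i => (m + i - 1) % k)
    (fun i _ _ => Nat.mod_lt _ hk0) ?_ ?_ ?_
  · intro i j hi hik hj hjk hij
    have h1 : (m + (i-1)) % k = (m + (j-1)) % k := by
      have e1 : m + i - 1 = m + (i-1) := by omega
      have e2 : m + j - 1 = m + (j-1) := by omega
      rw [e1, e2] at hij; exact hij
    rcases le_total i j with hle | hle
    · have : k ∣ (m + (j-1)) - (m + (i-1)) :=
        (Nat.modEq_iff_dvd' (by omega)).mp h1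
      have : k ∣ (j - i) := by
        have e : (m + (j-1)) - (m + (i-1)) = j - i := by omega
        rwa [e] at this
      rcases Nat.eq_zero_of_dvd_of_lt this (by omega) |>.symm with h
      omega
    · have : k ∣ (m + (i-1)) - (m + (j-1)) :=
        (Nat.modEq_iff_dvd' (by omega)).mp h1.symm
      have : k ∣ (i - j) := by
        have e : (m + (i-1)) - (m + (j-1)) = i - j := by omega
        rwa [e] at this
      have := Nat.eq_zero_of_dvd_of_lt this (by omega)
      omega
  · intro _
    show G.Adj w (c ((m + 1 - 1) % k))
    have : (m + 1 - 1) % k = m := by rw [Nat.add_sub_cancel, Nat.mod_eq_of_lt hm]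
    rw [this]; exact hwm
  · intro i hi hik
    show G.Adj (c ((m + i - 1) % k)) (c ((m + (i+1) - 1) % k))
    have h := hadj ((m + i - 1) % k) (Nat.mod_lt _ hk0)
    have e : ((m + i - 1) % k + 1) % k = (m + (i+1) - 1) % k := by
      rw [Nat.mod_add_mod]
      congr 1
      omega
    rwa [e] at h


variable {k : ℕ} {v : ℕ → V} (hv : Good G k v) (hmax : ∀ u, ¬ Good G (k+1) u)

include hv hmax

lemma nbrs_of_head : ∀ x, G.Adj (v 0) x → ∃ i, i < k ∧ v i = x := by
  intro x hx
  by_contra hcon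
  push_neg at hcon
  refine hmax _ (good_fresh_cons hv x (fun i hi => hcon i hi) (fun i => i - 1)
    (fun i h1 h2 => by omega)
    (fun i j h1 h2 h3 h4 h5 => by omega) ?_ ?_)
  · intro _
    simpa using hx.symm
  · intro i hi hik
    show G.Adj (v (i - 1)) (v (i + 1 - 1))
    have h := hv.2 (i-1) (by omega)
    have e : i - 1 + 1 = i := by omega
    rw [e] at h
    have e2 : i + 1 - 1 = i := by omega
    rw [e2]
    exact h

lemma nbrs_of_last : ∀ x, G.Adj (v (k-1)) x → ∃ i, i < k ∧ v i = x := by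
  intro x hx
  have hv' := good_reverse hv
  obtain ⟨i, hi, hvi⟩ := nbrs_of_head hv' hmax x (by simpa using hx)
  exact ⟨k - 1 - i, by omega, hvi⟩

variable (w : V) (hw : ∀ i < k, v i ≠ w) {m : ℕ} (hm : m < k) (hwm : G.Adj w (v m))

include hw hm hwm

lemma ends_not_adj : ¬ G.Adj (v 0) (v (k-1)) := by
  intro h
  refine hmax _ (good_succ_of_cycle v hv.1 ?_ w hw m hm hwm)
  intro i hi
  by_cases hik : i + 1 < k
  · rw [Nat.mod_eq_of_lt hik]; exact hv.2 i hik
  · have e1 : (i+1) % k = 0 := by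
      have : i + 1 = k := by omega
      rw [this, Nat.mod_self]
    have e2 : i = k - 1 := by omega
    rw [e1, e2]
    exact h.symm

lemma no_crossing (j : ℕ) (hj : j + 1 < k) :
    ¬ (G.Adj (v 0) (v (j+1)) ∧ G.Adj (v (k-1)) (v j)) := by
  rintro ⟨h1, h2⟩
  set c : ℕ → V := fun i => if i ≤ j then v i else v (k + j - i) with hc
  have hcval : ∀ i, j < i → i < k → c i = v (k + j - i) := by
    intro i h hik
    simp only [hc, if_neg (by omega : ¬ i ≤ j)]
  have hcval2 : ∀ i, i ≤ j → c i = v i := by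
    intro i h
    simp only [hc, if_pos h]
  have hcrange : ∀ i < k, ∃ i', i' < k ∧ c i = v i' := by
    intro i hi
    by_cases h : i ≤ j
    · exact ⟨i, hi, hcval2 i h⟩
    · exact ⟨k + j - i, by omega, hcval i (by omega) hi⟩
  have hcinj : ∀ i < k, ∀ i' < k, c i = c i' → i = i' := by
    intro a ha b hb hab
    by_cases h1' : a ≤ j <;> by_cases h2' : b ≤ j
    · rw [hcval2 a h1', hcval2 b h2'] at hab
      exact hv.1 a (by omega) b (by omega) hab
    · rw [hcval2 a h1', hcval b (by omega) hb] at hab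
      have := hv.1 a (by omega) _ (by omega) hab
      omega
    · rw [hcval a (by omega) ha, hcval2 b h2'] at hab
      have := hv.1 _ (by omega) b (by omega) hab
      omega
    · rw [hcval a (by omega) ha, hcval b (by omega) hb] at hab
      have := hv.1 _ (by omega) _ (by omega) hab
      omega
  have hcadj : ∀ i < k, G.Adj (c i) (c ((i+1) % k)) := by
    intro i hi
    rcases lt_trichotomy i j with h | h | h
    · rw [Nat.mod_eq_of_lt (by omega), hcval2 i (by omega), hcval2 (i+1) (by omega)]
      exact hv.2 i (by omega)
    · subst h
      rw [Nat.mod_eq_of_lt (by omega), hcval2 i le_rfl, hcval (i+1) (by omega) (by omega)]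
      have e : k + i - (i+1) = k - 1 := by omega
      rw [e]
      exact h2.symm
    · by_cases hik : i + 1 < k
      · rw [Nat.mod_eq_of_lt hik, hcval i h hi, hcval (i+1) (by omega) hik]
        have h' := hv.2 (k + j - (i+1)) (by omega)
        have e : k + j - (i + 1) + 1 = k + j - i := by omega
        rw [e] at h'
        exact h'.symm
      · have e1 : (i+1) % k = 0 := by
          have : i + 1 = k := by omega
          rw [this, Nat.mod_self]
        rw [e1, hcval i h hi, hcval2 0 (by omega)]
        have e : k + j - i = j + 1 := by omega
        rw [e]
        exact h1.symm
  have hcw : ∀ i < k, c i ≠ w := by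
    intro i hi
    obtain ⟨i', hi', he⟩ := hcrange i hi
    rw [he]
    exact hw i' hi'
  have hmc : ∃ m', m' < k ∧ c m' = v m := by
    by_cases h : m ≤ j
    · exact ⟨m, hm, hcval2 m h⟩
    · refine ⟨k + j - m, by omega, ?_⟩
      rw [hcval (k+j-m) (by omega) (by omega)]
      congr 1
      omega
  obtain ⟨m', hm', hcm⟩ := hmc
  exact hmax _ (good_succ_of_cycle c hcinj hcadj w hcw m' hm' (by rw [hcm]; exact hwm))



omit hm hwm in
/-- `w ~ v j` and `v 0 ~ v (j+1)` gives a longer path: contradiction. -/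
lemma ham1 {j : ℕ} (hj : j + 1 < k) (h1 : G.Adj w (v j)) (h2 : G.Adj (v 0) (v (j+1))) :
    False := by
  refine hmax _ (good_fresh_cons hv w hw (fun i => if i ≤ j + 1 then j + 1 - i else i - 1)
    (fun i ha hb => by split <;> omega)
    (fun a b h1' h2' h3' h4' h5' => by split at h5' <;> split at h5' <;> omega)
    ?_ ?_)
  · intro hk
    show G.Adj w (v (if 1 ≤ j + 1 then j + 1 - 1 else 1 - 1))
    have e : (if 1 ≤ j + 1 then j + 1 - 1 else 1 - 1) = j := by simp
    rw [e]
    exact h1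
  · intro i hi hik
    rcases lt_trichotomy i (j+1) with h | h | h
    · rw [if_pos (by omega), if_pos (by omega)]
      have h' := hv.2 (j - i) (by omega)
      have e1 : j - i + 1 = j + 1 - i := by omega
      have e2 : j + 1 - (i + 1) = j - i := by omega
      rw [e1] at h'
      rw [e2]
      exact h'.symm
    · subst h
      rw [if_pos le_rfl, if_neg (by omega)]
      simpa using h2
    · rw [if_neg (by omega), if_neg (by omega)]
      have h' := hv.2 (i - 1) (by omega)
      have e : i - 1 + 1 = i := by omega
      rw [e] at h'
      have e2 : i + 1 - 1 = i := by omega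
      rw [e2]
      exact h'
omit hm hwm in
/-- `w ~ v j` and `v (k-1) ~ v (j-1)` gives a longer path: contradiction. -/
lemma ham2 {j : ℕ} (hj1 : 1 ≤ j) (hj : j < k) (h1 : G.Adj w (v j))
    (h2 : G.Adj (v (k-1)) (v (j-1))) : False := by
  refine hmax _ (good_fresh_cons hv w hw (fun i => if i ≤ k - j then j - 1 + i else k - i)
    (fun i ha hb => by split <;> omega)
    (fun a b h1' h2' h3' h4' h5' => by split at h5' <;> split at h5' <;> omega)
    ?_ ?_)
  · intro hk
    show G.Adj w (v (if 1 ≤ k - j then j - 1 + 1 else k - 1))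
    have e : (if 1 ≤ k - j then j - 1 + 1 else k - 1) = j := by
      rw [if_pos (by omega)]; omega
    rw [e]
    exact h1
  · intro i hi hik
    rcases lt_trichotomy i (k - j) with h | h | h
    · rw [if_pos (by omega), if_pos (by omega)]
      have h' := hv.2 (j - 1 + i) (by omega)
      have e : j - 1 + i + 1 = j - 1 + (i + 1) := by omega
      rw [e] at h'
      exact h'
    · subst h
      rw [if_pos le_rfl, if_neg (by omega)]
      have e1 : j - 1 + (k - j) = k - 1 := by omega
      have e2 : k - (k - j + 1) = j - 1 := by omega
      rw [e1, e2]
      exact h2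
    · rw [if_neg (by omega), if_neg (by omega)]
      have h' := hv.2 (k - (i+1)) (by omega)
      have e : k - (i + 1) + 1 = k - i := by omega
      rw [e] at h'
      exact h'.symm

omit hm hwm in
/-- `w ~ v j` and `w ~ v (j+1)` gives a longer path: contradiction. -/
lemma ham3 {j : ℕ} (hj : j + 1 < k) (h1 : G.Adj w (v j)) (h2 : G.Adj w (v (j+1))) :
    False := by
  refine hmax (fun i => if i ≤ j then v i else if i = j + 1 then w else v (i-1)) ⟨?_, ?_⟩
  · intro a ha b hb hab
    simp only at hab
    by_cases h1' : a ≤ j <;> by_cases h2' : b ≤ j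
    · rw [if_pos h1', if_pos h2'] at hab
      exact hv.1 a (by omega) b (by omega) hab
    · rw [if_pos h1', if_neg h2'] at hab
      by_cases hb' : b = j + 1
      · rw [if_pos hb'] at hab
        exact absurd hab (hw a (by omega))
      · rw [if_neg hb'] at hab
        have := hv.1 a (by omega) (b-1) (by omega) hab
        omega
    · rw [if_neg h1', if_pos h2'] at hab
      by_cases ha' : a = j + 1
      · rw [if_pos ha'] at hab
        exact absurd hab.symm (hw b (by omega))
      · rw [if_neg ha'] at hab
        have := hv.1 (a-1) (by omega) b (by omega) hab
        omega
    · rw [if_neg h1', if_neg h2'] at hab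
      by_cases ha' : a = j + 1 <;> by_cases hb' : b = j + 1
      · omega
      · rw [if_pos ha', if_neg hb'] at hab
        exact absurd hab.symm (hw (b-1) (by omega))
      · rw [if_neg ha', if_pos hb'] at hab
        exact absurd hab (hw (a-1) (by omega))
      · rw [if_neg ha', if_neg hb'] at hab
        have := hv.1 (a-1) (by omega) (b-1) (by omega) hab
        omega
  · intro i hi
    simp only
    rcases lt_trichotomy i j with h | h | h
    · rw [if_pos (by omega), if_pos (by omega)]
      exact hv.2 i (by omega)
    · subst h
      rw [if_pos le_rfl, if_neg (by omega), if_pos rfl]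
      exact h1.symm
    · by_cases h' : i = j + 1
      · rw [if_neg (by omega), if_pos h', if_neg (by omega), if_neg (by omega)]
        have e : i + 1 - 1 = j + 1 := by omega
        rw [e]
        exact h2
      · rw [if_neg (by omega), if_neg h', if_neg (by omega), if_neg (by omega)]
        have h'' := hv.2 (i-1) (by omega)
        have e : i - 1 + 1 = i := by omega
        rw [e] at h''
        have e2 : i + 1 - 1 = i := by omega
        rw [e2]
        exact h''

end
section
variable {V : Type*} [Fintype V] [DecidableEq V] {G : SimpleGraph V} [DecidableRel G.Adj]

/-- no-two-consecutive subsets of an interval are at most half. -/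
lemma nonconsec_card (C : Finset ℕ) (a b : ℕ) (hsub : C ⊆ Finset.Icc a b)
    (hnc : ∀ j ∈ C, j + 1 ∉ C) : C.card ≤ (b + 2 - a) / 2 := by
  have h1 : C.card ≤ (Finset.range ((b + 2 - a)/2)).card := by
    refine Finset.card_le_card_of_injOn (fun j => (j - a) / 2) ?_ ?_
    · intro j hj
      have := hsub hj
      simp only [Finset.mem_Icc] at this
      simp only [Finset.mem_coe, Finset.mem_range]
      omega
    · intro j hj j' hj' heq
      simp only at heq
      by_contra hne
      have h1 := hsub hj
      have h2 := hsub hj'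
      simp only [Finset.mem_Icc] at h1 h2
      rcases Nat.lt_or_ge j j' with h | h
      · rcases Nat.eq_or_lt_of_le h with h' | h'
        · exact hnc j hj (by rwa [show j + 1 = j' by omega])
        · omega
      · rcases Nat.eq_or_lt_of_le h with h' | h'
        · exact hne h'.symm
        · rcases Nat.eq_or_lt_of_le h' with h'' | h''
          · exact hnc j' hj' (by rwa [show j' + 1 = j by omega])
          · omega
  simpa using h1

lemma card_odd_range (m : ℕ) :
    ((Finset.range (2*m+1)).filter (fun j => j % 2 = 1)).card = m := by
  have himg : (Finset.range (2*m+1)).filter (fun j => j % 2 = 1)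
      = (Finset.range m).image (fun s => 2*s+1) := by
    ext j
    simp only [Finset.mem_filter, Finset.mem_range, Finset.mem_image]
    constructor
    · rintro ⟨h1, h2⟩
      exact ⟨j / 2, by omega, by omega⟩
    · rintro ⟨s, hs, rfl⟩
      omega
  rw [himg, Finset.card_image_of_injective _ (fun a b h => by omega), Finset.card_range]

lemma good_two_of_adj {x y : V} (h : G.Adj x y) :
    Good G 2 (fun i => if i = 0 then x else y) := by
  constructor
  · intro i hi j hj hij
    simp only at hij
    by_cases hi0 : i = 0 <;> by_cases hj0 : j = 0
    · omega
    · rw [if_pos hi0, if_neg hj0] at hij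
      exact absurd hij h.ne
    · rw [if_neg hi0, if_pos hj0] at hij
      exact absurd hij.symm h.ne
    · omega
  · intro i hi
    have : i = 0 := by omega
    subst this
    simpa using h

lemma cross_aux {k : ℕ} {v : ℕ → V} {a b : V} (p : G.Walk a b) :
    ∀ (_ : ∃ m, m < k ∧ v m = a) (_ : ∀ i < k, v i ≠ b),
    ∃ w m, m < k ∧ (∀ i < k, v i ≠ w) ∧ G.Adj w (v m) := by
  induction p with
  | nil =>
    intro ha hb
    obtain ⟨m, hm, hvm⟩ := ha
    exact absurd hvm (hb m hm)
  | @cons x y z h q ih =>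
    intro ha hb
    by_cases hy : ∃ m, m < k ∧ v m = y
    · exact ih hy hb
    · push_neg at hy
      obtain ⟨m, hm, hvm⟩ := ha
      exact ⟨y, m, hm, fun i hi hiv => hy i hi hiv, by rw [hvm]; exact h.symm⟩

lemma exists_cross (hconn : G.Connected) {k : ℕ} {v : ℕ → V} (hk : 0 < k)
    (x₀ : V) (hx : ∀ i < k, v i ≠ x₀) :
    ∃ w m, m < k ∧ (∀ i < k, v i ≠ w) ∧ G.Adj w (v m) := by
  obtain ⟨p⟩ := hconn.preconnected (v 0) x₀
  exact cross_aux p ⟨0, hk, rfl⟩ hx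

lemma exists_max_path (hconn : G.Connected) (hcard2 : 2 ≤ Fintype.card V) :
    ∃ k v, Good G k v ∧ 2 ≤ k ∧ ∀ k' v', Good G k' v' → k' ≤ k := by
  classical
  have hP2 : ∃ v : ℕ → V, Good G 2 v := by
    obtain ⟨x, y, hxy⟩ := Fintype.exists_pair_of_one_lt_card (α := V) (by omega)
    obtain ⟨p⟩ := hconn.preconnected x y
    cases p with
    | nil => exact absurd rfl hxy
    | cons h q => exact ⟨_, good_two_of_adj h⟩
  set P : ℕ → Prop := fun m => ∃ v : ℕ → V, Good G m v with hP
  have hdec : DecidablePred P := Classical.decPred P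
  refine ⟨Nat.findGreatest P (Fintype.card V), ?_⟩
  have hspec : P (Nat.findGreatest P (Fintype.card V)) :=
    Nat.findGreatest_spec (m := 2) hcard2 hP2
  obtain ⟨v, hv⟩ := hspec
  refine ⟨v, hv, Nat.le_findGreatest hcard2 hP2, ?_⟩
  intro k' v' hv'
  by_contra hlt
  push_neg at hlt
  exact Nat.findGreatest_is_greatest hlt (good_le_card _ _ hv') ⟨v', hv'⟩
end

section
variable {V : Type*} [Fintype V] [DecidableEq V] {G : SimpleGraph V} [DecidableRel G.Adj]
variable {k : ℕ} {v : ℕ → V} (hv : Good G k v) (hmax : ∀ u, ¬ Good G (k+1) u)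

include hv hmax

lemma deg_count_head :
    ((Finset.range (k-1)).filter (fun i => G.Adj (v 0) (v (i+1)))).card = G.degree (v 0) := by
  rw [← card_neighborFinset_eq_degree]
  refine Finset.card_bij (fun a _ => v (a+1)) ?_ ?_ ?_
  · intro a ha
    simp only [Finset.mem_filter, Finset.mem_range] at ha
    rw [mem_neighborFinset]
    exact ha.2
  · intro a ha b hb heq
    simp only [Finset.mem_filter, Finset.mem_range] at ha hb
    have := hv.1 (a+1) (by omega) (b+1) (by omega) heq
    omega
  · intro x hx
    rw [mem_neighborFinset] at hx
    obtain ⟨i, hi, hvi⟩ := nbrs_of_head hv hmax x hx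
    have hi0 : i ≠ 0 := by rintro rfl; exact hx.ne hvi
    refine ⟨i - 1, ?_, ?_⟩
    · simp only [Finset.mem_filter, Finset.mem_range]
      refine ⟨by omega, ?_⟩
      have e : i - 1 + 1 = i := by omega
      rw [e, hvi]; exact hx
    · show v (i - 1 + 1) = x
      have e : i - 1 + 1 = i := by omega
      rw [e, hvi]

lemma deg_count_last :
    ((Finset.range (k-1)).filter (fun i => G.Adj (v (k-1)) (v i))).card = G.degree (v (k-1)) := by
  rw [← card_neighborFinset_eq_degree]
  refine Finset.card_bij (fun a _ => v a) ?_ ?_ ?_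
  · intro a ha
    simp only [Finset.mem_filter, Finset.mem_range] at ha
    rw [mem_neighborFinset]
    exact ha.2
  · intro a ha b hb heq
    simp only [Finset.mem_filter, Finset.mem_range] at ha hb
    exact hv.1 a (by omega) b (by omega) heq
  · intro x hx
    rw [mem_neighborFinset] at hx
    obtain ⟨i, hi, hvi⟩ := nbrs_of_last hv hmax x hx
    have hik : i ≠ k - 1 := by rintro rfl; exact hx.ne hvi
    refine ⟨i, ?_, hvi⟩
    simp only [Finset.mem_filter, Finset.mem_range]
    refine ⟨by omega, ?_⟩
    rw [hvi]; exact hx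

variable (w : V) (hw : ∀ i < k, v i ≠ w) {m : ℕ} (hm : m < k) (hwm : G.Adj w (v m))

include hw hm hwm

lemma AB_disjoint :
    Disjoint ((Finset.range (k-1)).filter (fun i => G.Adj (v 0) (v (i+1))))
      ((Finset.range (k-1)).filter (fun i => G.Adj (v (k-1)) (v i))) := by
  rw [Finset.disjoint_left]
  intro i hiA hiB
  simp only [Finset.mem_filter, Finset.mem_range] at hiA hiB
  exact no_crossing hv hmax w hw hm hwm i (by omega) ⟨hiA.2, hiB.2⟩

lemma deg_sum_le (hk : 2 ≤ k) : G.degree (v 0) + G.degree (v (k-1)) + 1 ≤ k := by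
  have hA := deg_count_head hv hmax
  have hB := deg_count_last hv hmax
  have hd := AB_disjoint hv hmax w hw hm hwm
  have hU : (((Finset.range (k-1)).filter (fun i => G.Adj (v 0) (v (i+1)))) ∪
      ((Finset.range (k-1)).filter (fun i => G.Adj (v (k-1)) (v i)))).card ≤ k - 1 := by
    refine le_trans (Finset.card_le_card (Finset.union_subset (Finset.filter_subset _ _)
      (Finset.filter_subset _ _))) ?_
    rw [Finset.card_range]
  rw [Finset.card_union_of_disjoint hd, hA, hB] at hU
  omega

end

section
variable {V : Type*} [Fintype V] [DecidableEq V] {G : SimpleGraph V} [DecidableRel G.Adj]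

lemma all_mem {k : ℕ} {v : ℕ → V} (hv : Good G k v) {w : V} (hw : ∀ i < k, v i ≠ w)
    (hck : Fintype.card V = k + 1) : ∀ x : V, x = w ∨ ∃ i, i < k ∧ v i = x := by
  classical
  set f : Fin (k+1) → V := fun i => if h : (i : ℕ) < k then v i else w with hf
  have hinj : Function.Injective f := by
    rintro ⟨a, ha⟩ ⟨b, hb⟩ hab
    simp only [hf] at hab
    by_cases h1 : a < k <;> by_cases h2 : b < k
    · rw [dif_pos h1, dif_pos h2] at hab
      exact Fin.ext (hv.1 a h1 b h2 hab)
    · rw [dif_pos h1, dif_neg h2] at hab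
      exact absurd hab (hw a h1)
    · rw [dif_neg h1, dif_pos h2] at hab
      exact absurd hab.symm (hw b h2)
    · exact Fin.ext (show a = b by omega)
  have hbij : Function.Bijective f := by
    rw [Fintype.bijective_iff_injective_and_card]
    exact ⟨hinj, by simp [hck]⟩
  intro x
  obtain ⟨⟨i, hik⟩, hfi⟩ := hbij.surjective x
  by_cases h : i < k
  · right
    refine ⟨i, h, ?_⟩
    simpa only [hf, dif_pos h] using hfi
  · left
    rw [← hfi]
    simp only [hf, dif_neg h]

end

section
variable {V : Type*} [Fintype V] [DecidableEq V] {G : SimpleGraph V} [DecidableRel G.Adj]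

/-- Structural lemma: for any path on all but one vertex `w`, the graph looks like
the extremal join near that path: `w`, `v 0`, `v (2t-6)` are adjacent exactly to the
odd-position vertices. -/
lemma big {t : ℕ} (ht : 5 ≤ t) (hcard : Fintype.card V = 2*t-4) (hconn : G.Connected)
    (hσ : ∀ x y : V, x ≠ y → ¬G.Adj x y → 2*t-6 ≤ G.degree x + G.degree y)
    (hnoham : ¬∃ (a b : V) (p : G.Walk a b), p.IsHamiltonian)
    {v : ℕ → V} (hv : Good G (2*t-5) v) {w : V} (hw : ∀ i < 2*t-5, v i ≠ w) :
    G.degree w = t-3 ∧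
    (∀ i < 2*t-5, (G.Adj w (v i) ↔ i % 2 = 1)) ∧
    (∀ i < 2*t-5, (G.Adj (v 0) (v i) ↔ i % 2 = 1)) ∧
    (∀ i < 2*t-5, (G.Adj (v (2*t-5-1)) (v i) ↔ i % 2 = 1)) := by
  classical
  set k : ℕ := 2*t-5 with hkdef
  have hk2 : 2 ≤ k := by omega
  have hmax : ∀ u, ¬ Good G (k+1) u := by
    intro u hu
    refine hnoham (ham_of_good u ?_)
    have e : Fintype.card V = k + 1 := by omega
    rwa [e]
  have hck : Fintype.card V = k + 1 := by omega
  have hall := all_mem hv hw hck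
  -- w has a neighbour on the path
  obtain ⟨w', m, hm, hw', hwm_raw⟩ := exists_cross (v := v) hconn (show 0 < k by omega) w hw
  have hww' : w' = w := by
    rcases hall w' with h | ⟨i, hik, hvi⟩
    · exact h
    · exact absurd hvi (hw' i hik)
  have hwm : G.Adj w (v m) := by rwa [hww'] at hwm_raw
  -- ends are nonadjacent
  have hends : ¬ G.Adj (v 0) (v (k-1)) := ends_not_adj hv hmax w hw hm hwm
  have hne : v 0 ≠ v (k-1) := by
    intro h
    have := hv.1 0 (by omega) (k-1) (by omega) h
    omega
  -- counting
  set A := (Finset.range (k-1)).filter (fun i => G.Adj (v 0) (v (i+1))) with hA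
  set B := (Finset.range (k-1)).filter (fun i => G.Adj (v (k-1)) (v i)) with hB
  have hAc : A.card = G.degree (v 0) := deg_count_head hv hmax
  have hBc : B.card = G.degree (v (k-1)) := deg_count_last hv hmax
  have hdisj : Disjoint A B := AB_disjoint hv hmax w hw hm hwm
  have hge : 2*t-6 ≤ G.degree (v 0) + G.degree (v (k-1)) := hσ _ _ hne hends
  have hsub : A ∪ B ⊆ Finset.range (k-1) :=
    Finset.union_subset (Finset.filter_subset _ _) (Finset.filter_subset _ _)
  have hle : G.degree (v 0) + G.degree (v (k-1)) ≤ k - 1 := by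
    have := le_trans (Finset.card_le_card hsub) (le_of_eq (Finset.card_range (k-1)))
    rw [Finset.card_union_of_disjoint hdisj, hAc, hBc] at this
    exact this
  have hsum : G.degree (v 0) + G.degree (v (k-1)) = 2*t-6 := by omega
  have hcover : A ∪ B = Finset.range (k-1) := by
    refine Finset.eq_of_subset_of_card_le hsub ?_
    rw [Finset.card_union_of_disjoint hdisj, hAc, hBc, Finset.card_range]
    omega
  have hmemcov : ∀ i < k-1, G.Adj (v 0) (v (i+1)) ∨ G.Adj (v (k-1)) (v i) := by
    intro i hi
    have : i ∈ A ∪ B := by rw [hcover]; exact Finset.mem_range.mpr hi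
    rcases Finset.mem_union.mp this with h | h
    · left; exact (Finset.mem_filter.mp h).2
    · right; exact (Finset.mem_filter.mp h).2
  -- w is not adjacent to the ends
  have hw0 : ¬ G.Adj w (v 0) := by
    intro h
    obtain ⟨i, hik, hvi⟩ := nbrs_of_head hv hmax w h.symm
    exact hw i hik hvi
  have hwlast : ¬ G.Adj w (v (k-1)) := by
    intro h
    obtain ⟨i, hik, hvi⟩ := nbrs_of_last hv hmax w h.symm
    exact hw i hik hvi
  -- neighbours of w are adjacent to both ends
  have hwstep : ∀ j < k, G.Adj w (v j) →
      G.Adj (v 0) (v j) ∧ G.Adj (v (k-1)) (v j) ∧ 1 ≤ j ∧ j ≤ k-2 := by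
    intro j hjk hadj
    have hj0 : j ≠ 0 := by rintro rfl; exact hw0 hadj
    have hjl : j ≠ k-1 := by rintro rfl; exact hwlast hadj
    have hj2 : j ≤ k - 2 := by omega
    have notA : ¬ G.Adj (v 0) (v (j+1)) := fun h =>
      ham1 hv hmax w hw (by omega) hadj h
    have hBj : G.Adj (v (k-1)) (v j) := by
      rcases hmemcov j (by omega) with h | h
      · exact absurd h notA
      · exact h
    have notB : ¬ G.Adj (v (k-1)) (v (j-1)) := fun h =>
      ham2 hv hmax w hw (by omega) (by omega) hadj h
    have hAj : G.Adj (v 0) (v j) := by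
      rcases hmemcov (j-1) (by omega) with h | h
      · have e : j - 1 + 1 = j := by omega
        rwa [e] at h
      · exact absurd h notB
    exact ⟨hAj, hBj, by omega, hj2⟩
  -- the neighbourhood of w as an index set
  set NB := (Finset.range k).filter (fun j => G.Adj w (v j)) with hNB
  have hNBc : NB.card = G.degree w := by
    rw [← card_neighborFinset_eq_degree]
    refine Finset.card_bij (fun a _ => v a) ?_ ?_ ?_
    · intro a ha
      simp only [hNB, Finset.mem_filter, Finset.mem_range] at ha
      rw [mem_neighborFinset]
      exact ha.2
    · intro a ha b hb heq
      simp only [hNB, Finset.mem_filter, Finset.mem_range] at ha hb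
      exact hv.1 a ha.1 b hb.1 heq
    · intro x hx
      rw [mem_neighborFinset] at hx
      rcases hall x with h | ⟨i, hik, hvi⟩
      · exact absurd (h ▸ hx) (G.irrefl)
      · refine ⟨i, ?_, hvi⟩
        simp only [hNB, Finset.mem_filter, Finset.mem_range]
        exact ⟨hik, by rw [hvi]; exact hx⟩
  have hnc : ∀ j ∈ NB, j + 1 ∉ NB := by
    intro j hj hj1
    simp only [hNB, Finset.mem_filter, Finset.mem_range] at hj hj1
    exact ham3 hv hmax w hw hj1.1 hj.2 hj1.2
  have hNBsub : NB ⊆ Finset.Icc 1 (k-2) := by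
    intro j hj
    simp only [hNB, Finset.mem_filter, Finset.mem_range] at hj
    have := hwstep j hj.1 hj.2
    simp only [Finset.mem_Icc]
    omega
  have hNBle : NB.card ≤ t - 3 := by
    have := nonconsec_card NB 1 (k-2) hNBsub hnc
    have e : (k - 2 + 2 - 1) / 2 = t - 3 := by omega
    rwa [e] at this
  -- degree of w equals t-3
  have hσw0 : 2*t-6 ≤ G.degree w + G.degree (v 0) :=
    hσ w (v 0) (fun h => hw 0 (by omega) h.symm) hw0
  have hσwl : 2*t-6 ≤ G.degree w + G.degree (v (k-1)) :=
    hσ w (v (k-1)) (fun h => hw (k-1) (by omega) h.symm) hwlast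
  have hdw : G.degree w = t - 3 := by omega
  have hdeg0 : G.degree (v 0) = t - 3 := by omega
  have hdegl : G.degree (v (k-1)) = t - 3 := by omega
  have hNBcard : NB.card = t - 3 := by omega
  -- all neighbours of w sit at odd positions
  have hNBodd : ∀ j ∈ NB, j % 2 = 1 := by
    intro j hj
    by_contra hodd
    have hjb := Finset.mem_Icc.mp (hNBsub hj)
    have hjeven : j % 2 = 0 := by omega
    set C1 := NB.filter (fun x => x < j) with hC1
    set C2 := NB.filter (fun x => j < x) with hC2
    have hC1sub : C1 ⊆ Finset.Icc 1 (j-2) := by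
      intro x hx
      simp only [hC1, Finset.mem_filter] at hx
      have hxb := Finset.mem_Icc.mp (hNBsub hx.1)
      have hxne : x ≠ j - 1 := by
        rintro rfl
        exact hnc _ hx.1 (by rwa [show j - 1 + 1 = j by omega])
      simp only [Finset.mem_Icc]
      omega
    have hC2sub : C2 ⊆ Finset.Icc (j+2) (k-2) := by
      intro x hx
      simp only [hC2, Finset.mem_filter] at hx
      have hxb := Finset.mem_Icc.mp (hNBsub hx.1)
      have hxne : x ≠ j + 1 := by
        rintro rfl
        exact hnc _ hj hx.1
      simp only [Finset.mem_Icc]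
      omega
    have hC1le : C1.card ≤ (j - 2 + 2 - 1) / 2 :=
      nonconsec_card C1 1 (j-2) hC1sub
        (fun x hx hx1 => hnc x (Finset.mem_of_mem_filter _ hx)
          (Finset.mem_of_mem_filter _ hx1))
    have hC2le : C2.card ≤ (k - 2 + 2 - (j+2)) / 2 :=
      nonconsec_card C2 (j+2) (k-2) hC2sub
        (fun x hx hx1 => hnc x (Finset.mem_of_mem_filter _ hx)
          (Finset.mem_of_mem_filter _ hx1))
    have hsplit : NB ⊆ C1 ∪ {j} ∪ C2 := by
      intro x hx
      rcases lt_trichotomy x j with h | h | h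
      · exact Finset.mem_union.mpr (Or.inl (Finset.mem_union.mpr (Or.inl
          (Finset.mem_filter.mpr ⟨hx, h⟩))))
      · exact Finset.mem_union.mpr (Or.inl (Finset.mem_union.mpr (Or.inr
          (Finset.mem_singleton.mpr h))))
      · exact Finset.mem_union.mpr (Or.inr (Finset.mem_filter.mpr ⟨hx, h⟩))
    have hcle : NB.card ≤ C1.card + 1 + C2.card := by
      calc NB.card ≤ (C1 ∪ {j} ∪ C2).card := Finset.card_le_card hsplit
        _ ≤ (C1 ∪ {j}).card + C2.card := Finset.card_union_le _ _
        _ ≤ C1.card + 1 + C2.card := by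
            have := Finset.card_union_le C1 ({j} : Finset ℕ)
            simp only [Finset.card_singleton] at this
            omega
    omega
  have hNBeq : NB = (Finset.range k).filter (fun j => j % 2 = 1) := by
    refine Finset.eq_of_subset_of_card_le ?_ ?_
    · intro j hj
      refine Finset.mem_filter.mpr ⟨Finset.mem_range.mpr ?_, hNBodd j hj⟩
      have := Finset.mem_range.mp (Finset.mem_of_mem_filter _ hj)
      exact this
    · have e : k = 2*(t-3)+1 := by omega
      rw [e, card_odd_range, hNBcard]
  have hoddmem : ∀ i, i < k → (i % 2 = 1 ↔ i ∈ NB) := by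
    intro i hik
    rw [hNBeq]
    simp only [Finset.mem_filter, Finset.mem_range]
    constructor
    · exact fun h => ⟨hik, h⟩
    · exact fun h => h.2
  have f1 : ∀ i < k, (G.Adj w (v i) ↔ i % 2 = 1) := by
    intro i hik
    constructor
    · intro h
      exact hNBodd i (Finset.mem_filter.mpr ⟨Finset.mem_range.mpr hik, h⟩)
    · intro h
      have := (hoddmem i hik).mp h
      simp only [hNB, Finset.mem_filter] at this
      exact this.2
  have key : ∀ y : V, G.degree y = t - 3 →
      (∀ j, j < k → G.Adj w (v j) → G.Adj y (v j)) →
      ∀ i, i < k → G.Adj y (v i) → i % 2 = 1 := by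
    intro y hdy hstep i hik h
    by_contra hodd
    set T := NB.image (fun j => v j) with hT
    have hTsub : T ⊆ G.neighborFinset y := by
      intro x hx
      simp only [hT, Finset.mem_image] at hx
      obtain ⟨j, hj, rfl⟩ := hx
      have hjk := Finset.mem_range.mp (Finset.mem_of_mem_filter _ hj)
      have hadjw : G.Adj w (v j) := (Finset.mem_filter.mp hj).2
      rw [mem_neighborFinset]
      exact hstep j hjk hadjw
    have hTc : T.card = t - 3 := by
      rw [hT, Finset.card_image_of_injOn, hNBcard]
      intro a ha b hb hab
      exact hv.1 a (Finset.mem_range.mp (Finset.mem_of_mem_filter _ ha)) b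
        (Finset.mem_range.mp (Finset.mem_of_mem_filter _ hb)) hab
    have hvinT : v i ∉ T := by
      intro hmem
      simp only [hT, Finset.mem_image] at hmem
      obtain ⟨j, hj, hje⟩ := hmem
      have hjk := Finset.mem_range.mp (Finset.mem_of_mem_filter _ hj)
      have hji := hv.1 j hjk i hik hje
      subst hji
      exact hodd (hNBodd _ hj)
    have hins : insert (v i) T ⊆ G.neighborFinset y := by
      intro x hx
      rcases Finset.mem_insert.mp hx with rfl | hx
      · rw [mem_neighborFinset]; exact h
      · exact hTsub hx
    have hfin := Finset.card_le_card hins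
    rw [Finset.card_insert_of_notMem hvinT, hTc, card_neighborFinset_eq_degree, hdy] at hfin
    omega
  have f2 : ∀ i < k, (G.Adj (v 0) (v i) ↔ i % 2 = 1) := by
    intro i hik
    exact ⟨key (v 0) hdeg0 (fun j hj ha => (hwstep j hj ha).1) i hik,
      fun h => (hwstep i hik ((f1 i hik).mpr h)).1⟩
  have f3 : ∀ i < k, (G.Adj (v (k-1)) (v i) ↔ i % 2 = 1) := by
    intro i hik
    exact ⟨key (v (k-1)) hdegl (fun j hj ha => (hwstep j hj ha).2.1) i hik,
      fun h => (hwstep i hik ((f1 i hik).mpr h)).2.1⟩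
  exact ⟨hdw, f1, f2, f3⟩
end

/-- Let `t ≥ 5` and let `G` be a connected graph on exactly `n = 2t - 4`
vertices with `σ₂(G) ≥ ((t-3)/(t-2))·n`. If `G` has no Hamiltonian path, then `G` is the
join of a graph on `t - 3` vertices with `t - 1` isolated vertices: there is a set `S`
of `t - 1` pairwise nonadjacent vertices such that every vertex of `S` is adjacent to
every vertex outside `S`. -/
theorem stmt_13 {V : Type*} [Fintype V] [DecidableEq V] (G : SimpleGraph V)
    [DecidableRel G.Adj] (t : ℕ) (ht : 5 ≤ t) (hcard : Fintype.card V = 2 * t - 4)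
    (hconn : G.Connected)
    (hσ₂ : ∀ x y : V, x ≠ y → ¬ G.Adj x y →
      ((t : ℝ) - 3) / ((t : ℝ) - 2) * (Fintype.card V : ℝ)
        ≤ (G.degree x : ℝ) + (G.degree y : ℝ))
    (hnoham : ¬ ∃ (a b : V) (p : G.Walk a b), p.IsHamiltonian) :
    ∃ S : Finset V, S.card = t - 1 ∧
      (∀ y ∈ S, ∀ z ∈ S, y ≠ z → ¬ G.Adj y z) ∧
      (∀ y ∈ S, ∀ x : V, x ∉ S → G.Adj y x) := by
  classical
  -- the degree-sum condition in ℕ form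
  have hσn : ∀ x y : V, x ≠ y → ¬ G.Adj x y → 2*t-6 ≤ G.degree x + G.degree y := by
    intro x y hxy hnadj
    have h := hσ₂ x y hxy hnadj
    have ht5 : (5:ℝ) ≤ (t:ℝ) := by exact_mod_cast ht
    have hcV : ((Fintype.card V : ℕ) : ℝ) = 2*(t:ℝ) - 4 := by
      rw [hcard, Nat.cast_sub (by omega : 4 ≤ 2*t)]
      push_cast
      ring
    rw [hcV] at h
    have hkey : ((t:ℝ)-3)/((t:ℝ)-2) * (2*(t:ℝ)-4) = 2*(t:ℝ)-6 := by
      have hpos : (0:ℝ) < (t:ℝ) - 2 := by linarith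
      field_simp
      ring
    rw [hkey] at h
    have hfin : ((2*t-6 : ℕ) : ℝ) ≤ (G.degree x : ℝ) + (G.degree y : ℝ) := by
      rw [Nat.cast_sub (by omega : 6 ≤ 2*t)]
      push_cast
      linarith
    exact_mod_cast hfin
  have hcard2 : 2 ≤ Fintype.card V := by omega
  obtain ⟨k, v, hv, hk2, hkmax⟩ := exists_max_path hconn hcard2
  have hmax : ∀ u, ¬ Good G (k+1) u := fun u hu => by have := hkmax (k+1) u hu; omega
  have hmaxcard : ∀ u : ℕ → V, ¬ Good G (Fintype.card V) u :=
    fun u hu => hnoham (ham_of_good u hu)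
  have hklt : k < Fintype.card V :=
    lt_of_le_of_ne (good_le_card _ _ hv) (fun h => hmaxcard v (by rwa [h] at hv))
  have hoff : ∃ x : V, ∀ i < k, v i ≠ x := by
    by_contra hc
    push_neg at hc
    have hsurj : Function.Surjective (fun i : Fin k => v i) := by
      intro x
      obtain ⟨i, hik, hvi⟩ := hc x
      exact ⟨⟨i, hik⟩, hvi⟩
    have hle := Fintype.card_le_of_surjective _ hsurj
    rw [Fintype.card_fin] at hle
    omega
  obtain ⟨x₀, hx₀⟩ := hoff
  obtain ⟨w, m, hm, hw, hwm⟩ := exists_cross (v := v) hconn (by omega) x₀ hx₀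
  have hends := ends_not_adj hv hmax w hw hm hwm
  have hne : v 0 ≠ v (k-1) := by
    intro h
    have := hv.1 0 (by omega) (k-1) (by omega) h
    omega
  have hds := deg_sum_le hv hmax w hw hm hwm hk2
  have hge := hσn (v 0) (v (k-1)) hne hends
  have hkeq : k = 2*t-5 := by omega
  subst hkeq
  obtain ⟨hdw, f1, f2, f3⟩ := big ht hcard hconn hσn hnoham hv hw
  set D := G.neighborFinset w with hD
  have hDcard : D.card = t - 3 := by rw [hD, card_neighborFinset_eq_degree, hdw]
  have hck : Fintype.card V = (2*t-5) + 1 := by omega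
  have hall := all_mem hv hw hck
  -- shared argument: a vertex whose adjacencies to an enumeration match `w`'s has
  -- the same neighbourhood as `w`
  have share : ∀ (u : ℕ → V) (y' : V),
      (∀ x : V, x = y' ∨ ∃ j, j < 2*t-5 ∧ u j = x) →
      (∀ j, j < 2*t-5 → (G.Adj y' (u j) ↔ j % 2 = 1)) →
      (∀ j, j < 2*t-5 → (G.Adj w (u j) ↔ j % 2 = 1)) →
      ¬ G.Adj w y' →
      G.neighborFinset y' = D := by
    intro u y' hallu fy fw hnadj
    ext x
    rw [mem_neighborFinset, hD, mem_neighborFinset]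
    constructor
    · intro h
      rcases hallu x with rfl | ⟨j, hj, rfl⟩
      · exact absurd h (G.irrefl)
      · exact (fw j hj).mpr ((fy j hj).mp h)
    · intro h
      rcases hallu x with rfl | ⟨j, hj, rfl⟩
      · exact absurd h hnadj
      · exact (fy j hj).mpr ((fw j hj).mp h)
  -- every vertex outside D has neighbourhood exactly D
  have hnbr : ∀ y ∈ Finset.univ \ D, G.neighborFinset y = D := by
    intro y hy
    have hyD : ¬ G.Adj w y := by
      have := (Finset.mem_sdiff.mp hy).2
      rwa [hD, mem_neighborFinset] at this
    rcases hall y with rfl | ⟨i, hik, rfl⟩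
    · rfl
    · have hieven : i % 2 = 0 := by
        by_contra hcon
        exact hyD ((f1 i hik).mpr (by omega))
      -- the rotated path avoiding `v i`
      set R : ℕ → V := fun j => if j = 0 then w else if j ≤ i then v (i - j) else v j with hR
      have hRval0 : R 0 = w := rfl
      have hRval1 : ∀ j, 1 ≤ j → j ≤ i → R j = v (i - j) := by
        intro j h1 h2
        simp only [hR, if_neg (by omega : j ≠ 0), if_pos h2]
      have hRval2 : ∀ j, i < j → R j = v j := by
        intro j h1
        simp only [hR, if_neg (by omega : j ≠ 0), if_neg (by omega : ¬ j ≤ i)]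
      have hRgood : Good G (2*t-5) R := by
        constructor
        · intro a ha b hb hab
          by_cases ha0 : a = 0 <;> by_cases hb0 : b = 0
          · omega
          · subst ha0
            rw [hRval0] at hab
            by_cases hbi : b ≤ i
            · rw [hRval1 b (by omega) hbi] at hab
              exact absurd hab.symm (hw _ (by omega))
            · rw [hRval2 b (by omega)] at hab
              exact absurd hab.symm (hw _ (by omega))
          · subst hb0
            rw [hRval0] at hab
            by_cases hai : a ≤ i
            · rw [hRval1 a (by omega) hai] at hab
              exact absurd hab (hw _ (by omega))
            · rw [hRval2 a (by omega)] at hab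
              exact absurd hab (hw _ (by omega))
          · by_cases hai : a ≤ i <;> by_cases hbi : b ≤ i
            · rw [hRval1 a (by omega) hai, hRval1 b (by omega) hbi] at hab
              have := hv.1 _ (by omega) _ (by omega) hab
              omega
            · rw [hRval1 a (by omega) hai, hRval2 b (by omega)] at hab
              have := hv.1 _ (by omega) _ (by omega) hab
              omega
            · rw [hRval2 a (by omega), hRval1 b (by omega) hbi] at hab
              have := hv.1 _ (by omega) _ (by omega) hab
              omega
            · rw [hRval2 a (by omega), hRval2 b (by omega)] at hab
              exact hv.1 _ (by omega) _ (by omega) hab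
        · intro j hj
          by_cases hj0 : j = 0
          · subst hj0
            rw [hRval0]
            by_cases hi0 : i = 0
            · rw [hRval2 1 (by omega)]
              exact (f1 1 (by omega)).mpr (by omega)
            · rw [hRval1 1 (by omega) (by omega)]
              exact (f1 (i-1) (by omega)).mpr (by omega)
          · rcases lt_trichotomy j i with h | h | h
            · rw [hRval1 j (by omega) (by omega), hRval1 (j+1) (by omega) (by omega)]
              have hadj := hv.2 (i - j - 1) (by omega)
              have e : i - j - 1 + 1 = i - j := by omega
              rw [e] at hadj
              have e2 : i - (j+1) = i - j - 1 := by omega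
              rw [e2]
              exact hadj.symm
            · subst h
              rw [hRval1 j (by omega) le_rfl, hRval2 (j+1) (by omega)]
              have e : j - j = 0 := by omega
              rw [e]
              exact (f2 (j+1) (by omega)).mpr (by omega)
            · rw [hRval2 j h, hRval2 (j+1) (by omega)]
              exact hv.2 j (by omega)
      have hRfresh : ∀ j < 2*t-5, R j ≠ v i := by
        intro j hj
        by_cases hj0 : j = 0
        · subst hj0
          rw [hRval0]
          exact fun h => hw i hik h.symm
        · by_cases hji : j ≤ i
          · rw [hRval1 j (by omega) hji]
            intro h
            have := hv.1 _ (by omega) _ (by omega) h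
            omega
          · rw [hRval2 j (by omega)]
            intro h
            have := hv.1 _ (by omega) _ (by omega) h
            omega
      obtain ⟨_, g1, g2, _⟩ := big ht hcard hconn hσn hnoham hRgood hRfresh
      have g2' : ∀ j, j < 2*t-5 → (G.Adj w (R j) ↔ j % 2 = 1) := by
        intro j hj
        have := g2 j hj
        rwa [hRval0] at this
      exact share R (v i) (all_mem hRgood hRfresh hck) g1 g2' hyD
  refine ⟨Finset.univ \ D, ?_, ?_, ?_⟩
  · rw [Finset.card_sdiff_of_subset (Finset.subset_univ _), Finset.card_univ, hcard, hDcard]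
    omega
  · intro y hy z hz hyz hadj
    have hz' : z ∈ D := by
      rw [← hnbr y hy, mem_neighborFinset]
      exact hadj
    exact (Finset.mem_sdiff.mp hz).2 hz'
  · intro y hy x hx
    have hxD : x ∈ D := by
      by_contra hcon
      exact hx (Finset.mem_sdiff.mpr ⟨Finset.mem_univ x, hcon⟩)
    rw [← hnbr y hy, mem_neighborFinset] at hxD
    exact hxD
end

section
/- Let t ≥ 5 be an integer. The complete bipartite graph K_{t-3,t-1} is a connected graph on 2t-4 vertices, satisfies σ₂(K_{t-3,t-1}) = 2(t-3) = ((t-3)/(t-2))·(2t-4), has no Hamiltonian path, and has no induced subgraph isomorphic to K_{1,t}. -/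
open SimpleGraph

section helpers
set_option linter.unusedSectionVars false
variable {α β : Type*} [Fintype α] [Fintype β]

lemma card_filter_isRight :
    (Finset.univ.filter (fun v : α ⊕ β => v.isRight)).card = Fintype.card β := by
  classical
  rw [show Finset.univ.filter (fun v : α ⊕ β => v.isRight) = Finset.univ.image Sum.inr from ?_,
    Finset.card_image_of_injective _ Sum.inr_injective, Finset.card_univ]
  ext v; cases v <;> simp

lemma card_filter_isLeft :
    (Finset.univ.filter (fun v : α ⊕ β => v.isLeft)).card = Fintype.card α := by
  classical
  rw [show Finset.univ.filter (fun v : α ⊕ β => v.isLeft) = Finset.univ.image Sum.inl from ?_,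
    Finset.card_image_of_injective _ Sum.inl_injective, Finset.card_univ]
  ext v; cases v <;> simp

lemma nbhd_inl (x : α) :
    (completeBipartiteGraph α β).neighborSet (Sum.inl x) = Set.range Sum.inr := by
  ext v; cases v <;> simp [mem_neighborSet]

lemma nbhd_inr (x : β) :
    (completeBipartiteGraph α β).neighborSet (Sum.inr x) = Set.range Sum.inl := by
  ext v; cases v <;> simp [mem_neighborSet]

lemma ncard_inl (x : α) :
    ((completeBipartiteGraph α β).neighborSet (Sum.inl x)).ncard = Fintype.card β := by
  rw [nbhd_inl, ← Nat.card_coe_set_eq, Nat.card_range_of_injective Sum.inr_injective,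
    Nat.card_eq_fintype_card]

lemma ncard_inr (x : β) :
    ((completeBipartiteGraph α β).neighborSet (Sum.inr x)).ncard = Fintype.card α := by
  rw [nbhd_inr, ← Nat.card_coe_set_eq, Nat.card_range_of_injective Sum.inl_injective,
    Nat.card_eq_fintype_card]

lemma walk_alt {a b : α ⊕ β} (p : (completeBipartiteGraph α β).Walk a b) :
    p.support.countP (fun v => v.isRight) ≤
      p.support.countP (fun v => v.isLeft) + (if a.isRight then 1 else 0) := by
  induction p with
  | nil => rename_i u; cases u <;> simp
  | @cons u c w h q ih =>
    simp only [completeBipartiteGraph_adj] at h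
    cases u <;> cases c <;> simp_all [List.countP_cons] <;> first | omega | simp at h

end helpers

lemma countP_of_count_one {V : Type*} [Fintype V] [DecidableEq V] (l : List V)
    (h : ∀ v, l.count v = 1) (q : V → Prop) [DecidablePred q] :
    l.countP (fun v => decide (q v)) = (Finset.univ.filter q).card := by
  have hm : (l : Multiset V) = Finset.univ.val := by
    refine Multiset.ext.2 fun v => ?_
    rw [Multiset.coe_count, h v,
      Multiset.count_eq_one_of_mem Finset.univ.nodup (Finset.mem_univ v)]
  rw [← Multiset.coe_countP, hm, Multiset.countP_eq_card_filter]
  rfl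

/-- `sigma2 G` is `σ₂(G)`: the minimum of `deg x + deg y` over all pairs of distinct
nonadjacent vertices `x, y` of `G` (degrees measured as `Set.ncard` of neighbor sets). -/
noncomputable def sigma2 {V : Type*} (G : SimpleGraph V) : ℕ :=
  sInf {s | ∃ x y : V, x ≠ y ∧ ¬ G.Adj x y ∧
    s = (G.neighborSet x).ncard + (G.neighborSet y).ncard}

/-- For `t ≥ 5`, the complete bipartite graph `K_{t-3,t-1}` is a connected
graph on `2t - 4` vertices with `σ₂ = 2(t-3) = ((t-3)/(t-2))·(2t-4)`, having neither a
Hamiltonian path nor an induced subgraph isomorphic to `K_{1,t}`. -/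
theorem stmt_14 (t : ℕ) (ht : 5 ≤ t) :
    (completeBipartiteGraph (Fin (t - 3)) (Fin (t - 1))).Connected ∧
    Fintype.card (Fin (t - 3) ⊕ Fin (t - 1)) = 2 * t - 4 ∧
    sigma2 (completeBipartiteGraph (Fin (t - 3)) (Fin (t - 1))) = 2 * (t - 3) ∧
    (2 * ((t : ℝ) - 3) = ((t : ℝ) - 3) / ((t : ℝ) - 2) * (2 * (t : ℝ) - 4)) ∧
    ¬ (∃ (a b : Fin (t - 3) ⊕ Fin (t - 1))
        (p : (completeBipartiteGraph (Fin (t - 3)) (Fin (t - 1))).Walk a b),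
        p.IsHamiltonian) ∧
    ¬ (∃ (x : Fin (t - 3) ⊕ Fin (t - 1)) (Y : Finset (Fin (t - 3) ⊕ Fin (t - 1))),
        Y.card = t ∧ x ∉ Y ∧
        (∀ y ∈ Y, (completeBipartiteGraph (Fin (t - 3)) (Fin (t - 1))).Adj x y) ∧
        ∀ y ∈ Y, ∀ z ∈ Y, y ≠ z →
          ¬ (completeBipartiteGraph (Fin (t - 3)) (Fin (t - 1))).Adj y z) := by
  have x0 : Fin (t - 3) := ⟨0, by omega⟩
  have y0 : Fin (t - 1) := ⟨0, by omega⟩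
  refine ⟨?_, ?_, ?_, ?_, ?_, ?_⟩
  · rw [connected_iff]
    refine ⟨fun u v => ?_, ⟨Sum.inl x0⟩⟩
    have key : ∀ w : Fin (t - 3) ⊕ Fin (t - 1),
        (completeBipartiteGraph (Fin (t - 3)) (Fin (t - 1))).Reachable w (Sum.inl x0) := by
      intro w
      cases w with
      | inl x =>
        exact ((show (completeBipartiteGraph (Fin (t - 3)) (Fin (t - 1))).Adj
            (Sum.inl x) (Sum.inr y0) by simp).reachable).trans
          ((show (completeBipartiteGraph (Fin (t - 3)) (Fin (t - 1))).Adj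
            (Sum.inr y0) (Sum.inl x0) by simp).reachable)
      | inr y =>
        exact (show (completeBipartiteGraph (Fin (t - 3)) (Fin (t - 1))).Adj
          (Sum.inr y) (Sum.inl x0) by simp).reachable
    exact (key u).trans (key v).symm
  · rw [Fintype.card_sum, Fintype.card_fin, Fintype.card_fin]; omega
  · unfold sigma2
    apply le_antisymm
    · apply Nat.sInf_le
      refine ⟨Sum.inr ⟨0, by omega⟩, Sum.inr ⟨1, by omega⟩, by simp [Fin.ext_iff], by simp, ?_⟩
      rw [ncard_inr, ncard_inr, Fintype.card_fin]; omega
    · apply le_csInf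
      · refine ⟨_, Sum.inr ⟨0, by omega⟩, Sum.inr ⟨1, by omega⟩, by simp [Fin.ext_iff],
          by simp, rfl⟩
      · rintro s ⟨x, y, hxy, hadj, rfl⟩
        cases x with
        | inl x =>
          cases y with
          | inl y => rw [ncard_inl, ncard_inl, Fintype.card_fin]; omega
          | inr y => exact absurd (by simp) hadj
        | inr x =>
          cases y with
          | inl y => exact absurd (by simp) hadj
          | inr y => rw [ncard_inr, ncard_inr, Fintype.card_fin]; omega
  · have h5 : (5 : ℝ) ≤ (t : ℝ) := by exact_mod_cast ht
    have h2 : (t : ℝ) - 2 ≠ 0 := by linarith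
    field_simp
    ring
  · rintro ⟨a, b, p, hp⟩
    have halt := walk_alt p
    have hR : p.support.countP (fun v => v.isRight) = t - 1 := by
      have := countP_of_count_one p.support hp (fun v => v.isRight)
      rw [card_filter_isRight, Fintype.card_fin] at this
      simpa using this
    have hL : p.support.countP (fun v => v.isLeft) = t - 3 := by
      have := countP_of_count_one p.support hp (fun v => v.isLeft)
      rw [card_filter_isLeft, Fintype.card_fin] at this
      simpa using this
    rw [hR, hL] at halt
    have hif : (if a.isRight then 1 else 0) ≤ 1 := by split <;> omega
    omega
  · rintro ⟨x, Y, hY, hxY, hadj, -⟩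
    cases x with
    | inl x =>
      have hsub : Y ⊆ Finset.univ.filter (fun v => v.isRight) := by
        intro y hy
        have h := hadj y hy
        cases y with
        | inl z => simp at h
        | inr z => simp
      have hle := Finset.card_le_card hsub
      rw [card_filter_isRight, Fintype.card_fin, hY] at hle
      omega
    | inr x =>
      have hsub : Y ⊆ Finset.univ.filter (fun v => v.isLeft) := by
        intro y hy
        have h := hadj y hy
        cases y with
        | inl z => simp
        | inr z => simp at h
      have hle := Finset.card_le_card hsub
      rw [card_filter_isLeft, Fintype.card_fin, hY] at hle
      omega
end

section
/- Let t ≥ 5 be an integer, let H be any graph on t-3 vertices, and let G = H ∨ K̄_{t-1} be the join of H with t-1 isolated vertices, so G has n = 2t-4 vertices. Then G is connected, σ₂(G) = ((t-3)/(t-2))·n, G has no Hamiltonian path, and G has no induced subgraph isomorphic to K_{1,t}. -/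
open SimpleGraph

/-- The join `H ∨ K̄_{t-1}` of a graph `H` on `Fin (t-3)` with `t - 1` isolated vertices:
its vertex set is `Fin (t-3) ⊕ Fin (t-1)`, the left part carries a copy of `H`, the right
part is independent, and all edges between the two parts are present. -/
def joinIndep (t : ℕ) (H : SimpleGraph (Fin (t - 3))) :
    SimpleGraph (Fin (t - 3) ⊕ Fin (t - 1)) :=
  H.map Sum.inl ⊔ completeBipartiteGraph (Fin (t - 3)) (Fin (t - 1))

lemma chain_countP {α : Type*} (P : α → Bool) :
    ∀ l : List α, l.Chain' (fun a b => ¬(P a ∧ P b)) →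
      2 * l.countP P ≤ l.length + 1
  | [], _ => by simp
  | [a], _ => by simp only [List.countP_cons, List.countP_nil, List.length_cons,
      List.length_nil]; split_ifs <;> omega
  | a :: b :: l, h => by
    have h1 : ¬(P a ∧ P b) := h.rel_head
    have h2 : (b :: l).Chain' (fun a b => ¬(P a ∧ P b)) := h.tail
    have h3 : l.Chain' (fun a b => ¬(P a ∧ P b)) := h2.tail
    have ih1 := chain_countP P (b :: l) h2
    have ih2 := chain_countP P l h3
    by_cases ha : P a
    · have hb : ¬ (P b = true) := fun hb => h1 ⟨ha, hb⟩
      simp only [List.countP_cons, List.length_cons] at *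
      split_ifs at * <;> omega
    · simp only [List.countP_cons, List.length_cons] at *
      split_ifs at * <;> omega

open SimpleGraph

section
variable {t : ℕ} {H : SimpleGraph (Fin (t - 3))}

lemma jadj_lr (a : Fin (t - 3)) (u : Fin (t - 1)) :
    (joinIndep t H).Adj (.inl a) (.inr u) := by
  simp [joinIndep]

lemma jadj_rr {u v : Fin (t - 1)} : ¬ (joinIndep t H).Adj (.inr u) (.inr v) := by
  simp [joinIndep, SimpleGraph.map, Relation.Map]

lemma jns_r (u : Fin (t - 1)) :
    (joinIndep t H).neighborSet (.inr u) = Set.range Sum.inl := by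
  ext v
  cases v with
  | inl a => simp [mem_neighborSet, (jadj_lr a u).symm]
  | inr b => simp [mem_neighborSet, jadj_rr]

lemma jns_r_ncard (u : Fin (t - 1)) :
    ((joinIndep t H).neighborSet (.inr u)).ncard = t - 3 := by
  rw [jns_r, ← Nat.card_coe_set_eq, Nat.card_range_of_injective Sum.inl_injective]
  simp [Nat.card_eq_fintype_card]

lemma jns_l_card (a : Fin (t - 3)) :
    t - 1 ≤ ((joinIndep t H).neighborSet (.inl a)).ncard := by
  have hsub : Set.range (Sum.inr : Fin (t-1) → _) ⊆ (joinIndep t H).neighborSet (.inl a) := by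
    rintro v ⟨u, rfl⟩; exact jadj_lr a u
  calc t - 1 = (Set.range (Sum.inr : Fin (t-1) → _)).ncard := by
        rw [← Nat.card_coe_set_eq, Nat.card_range_of_injective Sum.inr_injective]
        simp [Nat.card_eq_fintype_card]
    _ ≤ _ := Set.ncard_le_ncard hsub (Set.toFinite _)

end
lemma jadj_ne_rr {t : ℕ} {H : SimpleGraph (Fin (t - 3))} {u v : Fin (t-3) ⊕ Fin (t-1)}
    (h : (joinIndep t H).Adj u v) : ¬ (u.isRight ∧ v.isRight) := by
  rintro ⟨hu, hv⟩
  obtain ⟨a, rfl⟩ := Sum.isRight_iff.mp hu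
  obtain ⟨b, rfl⟩ := Sum.isRight_iff.mp hv
  exact jadj_rr h

/-- For `t ≥ 5` and any graph `H` on `t - 3` vertices, the join
`G = H ∨ K̄_{t-1}` is a connected graph on `n = 2t - 4` vertices with
`σ₂(G) = ((t-3)/(t-2))·n`, having neither a Hamiltonian path nor an induced subgraph
isomorphic to `K_{1,t}`. -/
theorem stmt_15 (t : ℕ) (ht : 5 ≤ t) (H : SimpleGraph (Fin (t - 3))) :
    (joinIndep t H).Connected ∧
    Fintype.card (Fin (t - 3) ⊕ Fin (t - 1)) = 2 * t - 4 ∧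
    (sigma2 (joinIndep t H) : ℝ) = ((t : ℝ) - 3) / ((t : ℝ) - 2) * (2 * (t : ℝ) - 4) ∧
    ¬ (∃ (a b : Fin (t - 3) ⊕ Fin (t - 1)) (p : (joinIndep t H).Walk a b),
        p.IsHamiltonian) ∧
    ¬ (∃ (x : Fin (t - 3) ⊕ Fin (t - 1)) (Y : Finset (Fin (t - 3) ⊕ Fin (t - 1))),
        Y.card = t ∧ x ∉ Y ∧ (∀ y ∈ Y, (joinIndep t H).Adj x y) ∧
        ∀ y ∈ Y, ∀ z ∈ Y, y ≠ z → ¬ (joinIndep t H).Adj y z) := by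
  have a0 : Fin (t - 3) := ⟨0, by omega⟩
  have u0 : Fin (t - 1) := ⟨0, by omega⟩
  have u1 : Fin (t - 1) := ⟨1, by omega⟩
  have hcard : Fintype.card (Fin (t - 3) ⊕ Fin (t - 1)) = 2 * t - 4 := by
    simp [Fintype.card_sum]; omega
  refine ⟨?_, hcard, ?_, ?_, ?_⟩
  · -- connected
    rw [connected_iff]
    refine ⟨?_, ⟨.inl a0⟩⟩
    · intro u v
      have key : ∀ w : Fin (t-3) ⊕ Fin (t-1), (joinIndep t H).Reachable w (.inr u0) := by
        intro w
        cases w with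
        | inl a => exact (jadj_lr a u0).reachable
        | inr u => exact ((jadj_lr a0 u).reachable.symm.trans (jadj_lr a0 u0).reachable)
      exact (key u).trans (key v).symm
  · -- sigma2
    have hval : sigma2 (joinIndep t H) = 2 * t - 6 := by
      have hlow : ∀ s ∈ {s | ∃ x y : Fin (t-3) ⊕ Fin (t-1), x ≠ y ∧ ¬ (joinIndep t H).Adj x y ∧
          s = ((joinIndep t H).neighborSet x).ncard + ((joinIndep t H).neighborSet y).ncard},
          2 * t - 6 ≤ s := by
        rintro s ⟨x, y, hxy, hnadj, rfl⟩
        have hdeg : ∀ v : Fin (t-3) ⊕ Fin (t-1), t - 3 ≤ ((joinIndep t H).neighborSet v).ncard := by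
          intro v
          cases v with
          | inl a => have := jns_l_card (H := H) a; omega
          | inr u => rw [jns_r_ncard]
        have h1 := hdeg x; have h2 := hdeg y; omega
      have hmem : (2 * t - 6) ∈ {s | ∃ x y : Fin (t-3) ⊕ Fin (t-1), x ≠ y ∧ ¬ (joinIndep t H).Adj x y ∧
          s = ((joinIndep t H).neighborSet x).ncard + ((joinIndep t H).neighborSet y).ncard} := by
        refine ⟨.inr ⟨0, by omega⟩, .inr ⟨1, by omega⟩, by simp, jadj_rr, ?_⟩
        rw [jns_r_ncard, jns_r_ncard]; omega
      exact le_antisymm (Nat.sInf_le hmem) (le_csInf ⟨_, hmem⟩ hlow)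
    rw [hval]
    have h5 : (5 : ℝ) ≤ (t : ℝ) := by exact_mod_cast ht
    have hne2 : (t : ℝ) - 2 ≠ 0 := by linarith
    rw [Nat.cast_sub (by omega)]
    push_cast
    field_simp
    ring
  · -- no Hamiltonian path
    rintro ⟨a, b, p, hp⟩
    set l := p.support with hl
    have hnodup : l.Nodup := hp.isPath.support_nodup
    have hlen : l.length = 2 * t - 4 := by
      rw [hl, SimpleGraph.Walk.length_support, hp.length_eq, hcard]; omega
    have hchain : l.Chain' (fun a b => ¬((Sum.isRight a : Bool) ∧ (Sum.isRight b : Bool))) :=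
      (p.isChain_adj_support).imp fun a b hab => jadj_ne_rr hab
    have hcount := chain_countP (fun v => v.isRight) l hchain
    have hfilter : l.countP (fun v => v.isRight) = t - 1 := by
      rw [List.countP_eq_length_filter]
      rw [← List.toFinset_card_of_nodup (hnodup.filter _), List.toFinset_filter,
        hp.support_toFinset]
      have : (Finset.univ.filter (fun v : Fin (t-3) ⊕ Fin (t-1) => (Sum.isRight v : Bool)))
          = Finset.univ.map ⟨Sum.inr, Sum.inr_injective⟩ := by
        ext v; cases v <;> simp
      rw [this, Finset.card_map, Finset.card_univ, Fintype.card_fin]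
    rw [hfilter, hlen] at hcount
    omega
  · -- no induced K_{1,t}
    rintro ⟨x, Y, hYcard, hxY, hadj, hind⟩
    by_cases hcase : ∀ y ∈ Y, ∃ a, y = Sum.inl a
    · have hsub : Y ⊆ Finset.univ.map ⟨Sum.inl, Sum.inl_injective⟩ := by
        intro y hy
        obtain ⟨a, rfl⟩ := hcase y hy
        simp
      have := Finset.card_le_card hsub
      rw [hYcard, Finset.card_map, Finset.card_univ, Fintype.card_fin] at this
      omega
    · push_neg at hcase
      obtain ⟨y, hy, hyl⟩ := hcase
      obtain ⟨u, rfl⟩ : ∃ u, y = Sum.inr u := by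
        cases y with
        | inl a => exact absurd rfl (hyl a)
        | inr u => exact ⟨u, rfl⟩
      have hsub : Y ⊆ Finset.univ.map ⟨Sum.inr, Sum.inr_injective⟩ := by
        intro z hz
        cases z with
        | inl a =>
          exact absurd ((jadj_lr a u).symm) (hind _ hy _ hz (by simp))
        | inr v => simp
      have := Finset.card_le_card hsub
      rw [hYcard, Finset.card_map, Finset.card_univ, Fintype.card_fin] at this
      omega
end

section
/- Let G be a graph and let C = c_1 c_2 … c_m c_1 be a longest cycle of G (indices taken modulo m). Suppose every path in G has at most m+1 vertices, and let v be a vertex of G not on C all of whose neighbors lie on C. Then deg(v) ≤ m/2. -/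
open SimpleGraph

/-- Walk along the cycle from `c j` to `c (j + n)`. -/
def arcWalk {V : Type*} (G : SimpleGraph V) (m : ℕ) (c : ZMod m → V)
    (hcadj : ∀ i : ZMod m, G.Adj (c i) (c (i + 1))) (j : ZMod m) :
    (n : ℕ) → G.Walk (c j) (c (j + n))
  | 0 => (SimpleGraph.Walk.nil).copy rfl (by simp)
  | n + 1 => ((arcWalk G m c hcadj j n).concat (hcadj (j + n))).copy rfl
      (congrArg c (by push_cast; ring))

lemma arcWalk_length {V : Type*} (G : SimpleGraph V) (m : ℕ) (c : ZMod m → V)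
    (hcadj : ∀ i : ZMod m, G.Adj (c i) (c (i + 1))) (j : ZMod m) (n : ℕ) :
    (arcWalk G m c hcadj j n).length = n := by
  induction n with
  | zero => simp [arcWalk]
  | succ n ih => simp [arcWalk, SimpleGraph.Walk.length_concat, ih]

lemma arcWalk_support {V : Type*} (G : SimpleGraph V) (m : ℕ) (c : ZMod m → V)
    (hcadj : ∀ i : ZMod m, G.Adj (c i) (c (i + 1))) (j : ZMod m) (n : ℕ) :
    (arcWalk G m c hcadj j n).support
      = (List.range (n + 1)).map (fun k : ℕ => c (j + k)) := by
  induction n with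
  | zero => simp [arcWalk, List.range_succ]
  | succ n ih =>
      simp only [arcWalk, SimpleGraph.Walk.support_copy,
        SimpleGraph.Walk.support_concat, ih, List.range_succ (n := n + 1),
        List.map_append, List.concat_eq_append]
      simp only [List.map_cons, List.map_nil]
      congr 2
      · congr 1
        push_cast
        ring

/-- Let `C = c₁ c₂ … c_m c₁` be a longest cycle of a graph `G` (indices
modulo `m`), and suppose every path in `G` has at most `m + 1` vertices. If `v` is a
vertex not on `C` all of whose neighbors lie on `C`, then `deg(v) ≤ m / 2`. -/
theorem stmt_16 {V : Type*} [Fintype V] (G : SimpleGraph V) [DecidableRel G.Adj]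
    (m : ℕ) (hm : 3 ≤ m)
    (c : ZMod m → V) (hcinj : Function.Injective c)
    (hcadj : ∀ i : ZMod m, G.Adj (c i) (c (i + 1)))
    (hlongest : ∀ (a : V) (w : G.Walk a a), w.IsCycle → w.length ≤ m)
    (hpath : ∀ (a b : V) (w : G.Walk a b), w.IsPath → w.length + 1 ≤ m + 1)
    (v : V) (hv : v ∉ Set.range c) (hnb : ∀ w : V, G.Adj v w → w ∈ Set.range c) :
    (G.degree v : ℝ) ≤ (m : ℝ) / 2 := by
  classical
  haveI : NeZero m := ⟨by omega⟩
  have hone : (1 : ZMod m) ≠ 0 := by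
    haveI : Fact (1 < m) := ⟨by omega⟩
    exact one_ne_zero
  have hm1 : ((m - 1 : ℕ) : ZMod m) = -1 := by
    rw [Nat.cast_sub (by omega), ZMod.natCast_self]; ring
  -- key: no two consecutive vertices of the cycle are both neighbors of v
  have key : ∀ i : ZMod m, G.Adj v (c i) → ¬ G.Adj v (c (i + 1)) := by
    intro i h1 h2
    have hend : c (i + 1 + ((m - 1 : ℕ) : ZMod m)) = c i := by
      rw [hm1]; ring_nf
    set A : G.Walk (c (i + 1)) (c i) :=
      (arcWalk G m c hcadj (i + 1) (m - 1)).copy rfl hend with hA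
    set P : G.Walk (c (i + 1)) v :=
      A.append (SimpleGraph.Walk.cons h1.symm SimpleGraph.Walk.nil) with hP
    have hAsupp : A.support = (List.range m).map (fun k : ℕ => c (i + 1 + k)) := by
      rw [hA, SimpleGraph.Walk.support_copy, arcWalk_support,
        show m - 1 + 1 = m from by omega]
    have hAsubset : ∀ x ∈ A.support, x ∈ Set.range c := by
      intro x hx
      rw [hAsupp] at hx
      obtain ⟨k, -, rfl⟩ := List.mem_map.mp hx
      exact ⟨_, rfl⟩
    have hPsupp : P.support = (List.range m).map (fun k : ℕ => c (i + 1 + k)) ++ [v] := by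
      rw [hP, SimpleGraph.Walk.support_append, hAsupp]
      simp
    have hPpath : P.IsPath := by
      apply SimpleGraph.Walk.IsPath.mk'
      rw [hPsupp]
      rw [List.nodup_append]
      refine ⟨?_, List.nodup_singleton v, ?_⟩
      · refine List.Nodup.map_on ?_ (List.nodup_range (n := m))
        intro k1 hk1 k2 hk2 hc
        have := hcinj hc
        have h12 : (k1 : ZMod m) = (k2 : ZMod m) := by
          have := add_left_cancel this
          exact this
        have hv1 : ((k1 : ZMod m)).val = k1 := ZMod.val_cast_of_lt (List.mem_range.mp hk1)
        have hv2 : ((k2 : ZMod m)).val = k2 := ZMod.val_cast_of_lt (List.mem_range.mp hk2)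
        rw [← hv1, ← hv2, h12]
      · intro x hx y hy hxy
        obtain ⟨k, -, rfl⟩ := List.mem_map.mp hx
        simp only [List.mem_singleton] at hy
        exact hv ⟨_, hxy.trans hy⟩
    have hedge : s(v, c (i + 1)) ∉ P.edges := by
      intro hmem
      rw [hP, SimpleGraph.Walk.edges_append] at hmem
      rcases List.mem_append.mp hmem with hmem | hmem
      · have : v ∈ A.support := SimpleGraph.Walk.fst_mem_support_of_mem_edges A hmem
        exact hv (hAsubset v this)
      · simp only [SimpleGraph.Walk.edges_cons, SimpleGraph.Walk.edges_nil,
          List.mem_singleton] at hmem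
        rw [Sym2.eq_iff] at hmem
        rcases hmem with ⟨hva, -⟩ | ⟨-, hcc⟩
        · exact hv ⟨i, hva.symm⟩
        · have : (i : ZMod m) + 1 = i := hcinj hcc
          have : (1 : ZMod m) = 0 := by
            have := sub_eq_zero_of_eq this
            simpa using this
          exact hone this
    have hcyc : (SimpleGraph.Walk.cons h2 P).IsCycle := by
      rw [SimpleGraph.Walk.cons_isCycle_iff]
      exact ⟨hPpath, hedge⟩
    have hlen : (SimpleGraph.Walk.cons h2 P).length = m + 1 := by
      simp [hP, hA, SimpleGraph.Walk.length_append, arcWalk_length]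
      omega
    have := hlongest v _ hcyc
    omega
  -- counting
  set T : Finset (ZMod m) := Finset.univ.filter (fun i => G.Adj v (c i)) with hT
  have hdeg : G.degree v = T.card := by
    have himg : G.neighborFinset v = T.image c := by
      ext w
      simp only [mem_neighborFinset, Finset.mem_image, hT, Finset.mem_filter,
        Finset.mem_univ, true_and]
      constructor
      · intro hw
        obtain ⟨i, rfl⟩ := hnb w hw
        exact ⟨i, hw, rfl⟩
      · rintro ⟨i, hi, rfl⟩
        exact hi
    rw [← card_neighborFinset_eq_degree, himg, Finset.card_image_of_injective _ hcinj]
  have hdisj : Disjoint T (T.image (· + 1)) := by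
    rw [Finset.disjoint_right]
    intro a ha haT
    obtain ⟨b, hb, rfl⟩ := Finset.mem_image.mp ha
    rw [hT, Finset.mem_filter] at hb haT
    exact key b hb.2 haT.2
  have hcard2 : T.card + T.card ≤ m := by
    have h1 : (T ∪ T.image (· + 1)).card = T.card + T.card := by
      rw [Finset.card_union_of_disjoint hdisj,
        Finset.card_image_of_injective _ (add_left_injective 1)]
    have h2 : (T ∪ T.image (· + 1)).card ≤ m := by
      calc (T ∪ T.image (· + 1)).card ≤ Fintype.card (ZMod m) :=
            Finset.card_le_univ _
        _ = m := ZMod.card m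
    omega
  have : (2 : ℝ) * (G.degree v : ℝ) ≤ (m : ℝ) := by
    rw [hdeg]
    exact_mod_cast (by omega : 2 * T.card ≤ m)
  linarith
end
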